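/- arXiv:2411.13068 — 12 statements merged into one kernel-verified Lean document; each statement's English description precedes it below -/
import Mathlib

section
/- For every n ≥ 0 the pair (r_n, p_n) lies in (0,1) × (0,1) (so the recursion is well defined), and the sequence (r_n) is strictly decreasing: r_{n+1} < r_n for all n ≥ 0. -/
/-! Since `m - (m - 1) p > 1` for `p < 1`, each step divides `r` by a number larger than one, so
`r` decreases and stays in `(0,1)`; then `r_{n+1} p_n / r_n ∈ (0,1)`, and `1 - (1 - x)(1 - y)` maps
`(0,1) × (0,1)` into `(0,1)`. -/

lemma div_sub_mul_mem_Ioo {m r p : ℝ} (hm : 1 < m) (hr : 0 < r) (hp : p < 1) :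
    r / (m - (m - 1) * p) ∈ Set.Ioo 0 r := by
  have hden : 1 < m - (m - 1) * p := by nlinarith
  exact ⟨div_pos hr (zero_lt_one.trans hden), div_lt_self hr hden⟩

lemma mul_div_mem_Ioo_zero_one {a b c : ℝ} (ha : a ∈ Set.Ioo 0 c) (hb : b ∈ Set.Ioo 0 1) :
    a * b / c ∈ Set.Ioo 0 1 := by
  obtain ⟨ha0, hac⟩ := ha
  obtain ⟨hb0, hb1⟩ := hb
  have hc : 0 < c := ha0.trans hac
  refine ⟨by positivity, (div_lt_one hc).2 ?_⟩
  nlinarith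

lemma one_sub_mul_one_sub_mem_Ioo {x y : ℝ} (hx : x ∈ Set.Ioo 0 1) (hy : y ∈ Set.Ioo 0 1) :
    1 - (1 - x) * (1 - y) ∈ Set.Ioo 0 1 := by
  obtain ⟨hx0, hx1⟩ := hx
  obtain ⟨hy0, hy1⟩ := hy
  constructor <;> nlinarith [mul_pos (sub_pos.2 hx1) (sub_pos.2 hy1)]

/-- For the generalized Derrida–Retaux parameter recursion
`r_{n+1} = r_n / (m - (m-1) p_n)`,
`p_{n+1} = 1 - (1 - r_{n+1})(1 - r_{n+1} p_n / r_n)`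
with `m > 1` and `(r_0, p_0) ∈ (0,1) × (0,1)`, every pair `(r_n, p_n)` lies in
`(0,1) × (0,1)` and the sequence `(r_n)` is strictly decreasing. -/
theorem stmt0 (m : ℝ) (hm : 1 < m) (r p : ℕ → ℝ)
    (hr0 : r 0 ∈ Set.Ioo (0 : ℝ) 1) (hp0 : p 0 ∈ Set.Ioo (0 : ℝ) 1)
    (hrec_r : ∀ n, r (n + 1) = r n / (m - (m - 1) * p n))
    (hrec_p : ∀ n, p (n + 1) = 1 - (1 - r (n + 1)) * (1 - r (n + 1) * p n / r n)) :
    (∀ n, r n ∈ Set.Ioo (0 : ℝ) 1 ∧ p n ∈ Set.Ioo (0 : ℝ) 1) ∧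
    (∀ n, r (n + 1) < r n) := by
  have step : ∀ n, r n ∈ Set.Ioo 0 1 → p n ∈ Set.Ioo 0 1 → r (n + 1) ∈ Set.Ioo 0 (r n) :=
    fun n hr hp => hrec_r n ▸ div_sub_mul_mem_Ioo hm hr.1 hp.2
  have mem : ∀ n, r n ∈ Set.Ioo 0 1 ∧ p n ∈ Set.Ioo 0 1 := by
    intro n
    induction n with
    | zero => exact ⟨hr0, hp0⟩
    | succ n ih =>
      have hr_lt := step n ih.1 ih.2
      have hr_mem : r (n + 1) ∈ Set.Ioo 0 1 := ⟨hr_lt.1, hr_lt.2.trans ih.1.2⟩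
      exact ⟨hr_mem, hrec_p n ▸
        one_sub_mul_one_sub_mem_Ioo hr_mem (mul_div_mem_Ioo_zero_one hr_lt ih.2)⟩
  exact ⟨mem, fun n => (step n (mem n).1 (mem n).2).2⟩
end

section
/- If μ_0 = G(r_0, p_0), then for every n ≥ 0 one has μ_n = G(r_n, p_n), where the parameter sequences satisfy the recursion r_{n+1} = r_n / (m - (m-1) p_n), p_{n+1} = 1 - (1 - r_{n+1})(1 - r_{n+1} p_n / r_n), with all (r_n, p_n) ∈ (0,1) × (0,1). -/
open Filter Finset Topology

/-- The geometric-type distribution `G(r,p)` on `ℕ`: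
mass `p` at `0` and mass `(1-p) r (1-r)^{k-1}` at `k ≥ 1`. -/
noncomputable def geomType (r p : ℝ) : ℕ → ℝ :=
  fun k => if k = 0 then p else (1 - p) * r * (1 - r) ^ (k - 1)

/-- Convolution of two (mass) functions on `ℕ`. -/
noncomputable def convOp (μ ν : ℕ → ℝ) : ℕ → ℝ :=
  fun n => ∑ i ∈ Finset.range (n + 1), μ i * ν (n - i)

/-- `k`-fold convolution power of a mass function on `ℕ`
(with the `0`-th power being the point mass at `0`). -/
noncomputable def convPow (μ : ℕ → ℝ) : ℕ → ℕ → ℝ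
  | 0 => fun n => if n = 0 then 1 else 0
  | k + 1 => convOp (convPow μ k) μ

/-- The mixture `ξ = Σ_{k ≥ 1} (1/m)(1 - 1/m)^{k-1} μ^{*k}`, i.e. the law of
`X_1 + ⋯ + X_η` where `η` is geometric on `{1,2,…}` with mean `m` and the `X_i`
are i.i.d. with law `μ`, independent of `η`. -/
noncomputable def DRmixture (m : ℝ) (μ : ℕ → ℝ) : ℕ → ℝ :=
  fun n => ∑' k : ℕ, (1 / m) * (1 - 1 / m) ^ k * convPow μ (k + 1) n

/-- The Derrida–Retaux transition operator: the law of `(X_1 + ⋯ + X_η - 1)_+`,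
i.e. the pushforward of the mixture under `j ↦ max (j - 1) 0`. -/
noncomputable def DRstep (m : ℝ) (μ : ℕ → ℝ) : ℕ → ℝ :=
  fun n => if n = 0 then DRmixture m μ 0 + DRmixture m μ 1 else DRmixture m μ (n + 1)

section Aux

lemma geomType_nonneg {r p : ℝ} (hr : r ∈ Set.Ioo (0:ℝ) 1) (hp : p ∈ Set.Ioo (0:ℝ) 1)
    (k : ℕ) : 0 ≤ geomType r p k := by
  obtain ⟨hr0, hr1⟩ := hr; obtain ⟨hp0, hp1⟩ := hp
  unfold geomType
  split
  · linarith
  · exact mul_nonneg (mul_nonneg (by linarith) hr0.le) (pow_nonneg (by linarith) _)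

lemma geomType_sum_range (r p : ℝ) (N : ℕ) :
    ∑ j ∈ Finset.range (N + 1), geomType r p j = p + (1 - p) * (1 - (1 - r) ^ N) := by
  induction N with
  | zero => simp [geomType]
  | succ N ih =>
    rw [Finset.sum_range_succ, ih]
    have : geomType r p (N + 1) = (1 - p) * r * (1 - r) ^ N := by simp [geomType]
    rw [this, pow_succ]; ring

lemma geomType_partial_le_one {r p : ℝ} (hr : r ∈ Set.Ioo (0:ℝ) 1) (hp : p ∈ Set.Ioo (0:ℝ) 1)
    (N : ℕ) : ∑ j ∈ Finset.range N, geomType r p j ≤ 1 := by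
  obtain ⟨hr0, hr1⟩ := hr; obtain ⟨hp0, hp1⟩ := hp
  cases N with
  | zero => simp
  | succ N =>
    rw [geomType_sum_range]
    have h1 : 0 ≤ (1 - r) ^ N := pow_nonneg (by linarith) _
    nlinarith

lemma conv_sum_eq (f g : ℕ → ℝ) : ∀ N, ∑ n ∈ Finset.range N, convOp f g n
    = ∑ i ∈ Finset.range N, f i * ∑ j ∈ Finset.range (N - i), g j := by
  intro N
  induction N with
  | zero => simp
  | succ N ih =>
    rw [Finset.sum_range_succ, ih,
      Finset.sum_range_succ (f := fun i => f i * ∑ j ∈ Finset.range (N + 1 - i), g j)]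
    have h1 : ∀ i ∈ Finset.range N, f i * ∑ j ∈ Finset.range (N + 1 - i), g j
        = f i * ∑ j ∈ Finset.range (N - i), g j + f i * g (N - i) := by
      intro i hi
      have hi' : N + 1 - i = (N - i) + 1 := by
        have := Finset.mem_range.mp hi; omega
      rw [hi', Finset.sum_range_succ, mul_add]
    rw [Finset.sum_congr rfl h1, Finset.sum_add_distrib]
    have h2 : convOp f g N = ∑ i ∈ Finset.range N, f i * g (N - i) + f N * g 0 := by
      unfold convOp
      rw [Finset.sum_range_succ]
      simp
    rw [h2]
    simp
    ring

lemma convPow_nonneg {μ : ℕ → ℝ} (h0 : ∀ n, 0 ≤ μ n) : ∀ k n, 0 ≤ convPow μ k n := by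
  intro k
  induction k with
  | zero => intro n; unfold convPow; split <;> norm_num
  | succ k ih =>
    intro n
    unfold convPow convOp
    exact Finset.sum_nonneg fun i _ => mul_nonneg (ih i) (h0 _)

lemma convPow_partial_le_one {μ : ℕ → ℝ} (h0 : ∀ n, 0 ≤ μ n)
    (h1 : ∀ N, ∑ j ∈ Finset.range N, μ j ≤ 1) :
    ∀ k N, ∑ n ∈ Finset.range N, convPow μ k n ≤ 1 := by
  intro k
  induction k with
  | zero =>
    intro N
    have : ∑ n ∈ Finset.range N, convPow μ 0 n
        = ∑ n ∈ Finset.range N, (if n = 0 then (1:ℝ) else 0) := rfl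
    rw [this, Finset.sum_ite_eq' (Finset.range N) 0 (fun _ => (1:ℝ))]
    split <;> norm_num
  | succ k ih =>
    intro N
    have : ∑ n ∈ Finset.range N, convPow μ (k+1) n
        = ∑ i ∈ Finset.range N, convPow μ k i * ∑ j ∈ Finset.range (N - i), μ j :=
      conv_sum_eq _ _ N
    rw [this]
    calc ∑ i ∈ Finset.range N, convPow μ k i * ∑ j ∈ Finset.range (N - i), μ j
        ≤ ∑ i ∈ Finset.range N, convPow μ k i * 1 := by
          apply Finset.sum_le_sum
          intro i _
          exact mul_le_mul_of_nonneg_left (h1 _) (convPow_nonneg h0 k i)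
      _ ≤ 1 := by simpa using ih N

lemma convPow_le_one {μ : ℕ → ℝ} (h0 : ∀ n, 0 ≤ μ n)
    (h1 : ∀ N, ∑ j ∈ Finset.range N, μ j ≤ 1) (k n : ℕ) : convPow μ k n ≤ 1 := by
  calc convPow μ k n ≤ ∑ j ∈ Finset.range (n+1), convPow μ k j :=
        Finset.single_le_sum (fun j _ => convPow_nonneg h0 k j) (Finset.self_mem_range_succ n)
    _ ≤ 1 := convPow_partial_le_one h0 h1 k (n+1)

lemma convPow_one (μ : ℕ → ℝ) (n : ℕ) : convPow μ 1 n = μ n := by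
  show convOp (convPow μ 0) μ n = μ n
  unfold convOp convPow
  simp only [ite_mul, one_mul, zero_mul]
  rw [Finset.sum_ite_eq' (Finset.range (n+1)) 0 (fun i => μ (n - i))]
  simp

section FuncEq

variable {m : ℝ} {μ : ℕ → ℝ}

lemma DRmix_summable (hm : 1 < m) (h0 : ∀ n, 0 ≤ μ n)
    (h1 : ∀ N, ∑ j ∈ Finset.range N, μ j ≤ 1) (n : ℕ) :
    Summable (fun k => (1 / m) * (1 - 1 / m) ^ k * convPow μ (k + 1) n) := by
  have hm0 : (0:ℝ) < m := by linarith
  have hb0 : (0:ℝ) ≤ 1 - 1/m := by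
    have : 1/m < 1 := by rw [div_lt_one hm0]; linarith
    linarith
  have hb1 : 1 - 1/m < 1 := by
    have : 0 < 1/m := by positivity
    linarith
  apply Summable.of_nonneg_of_le
  · intro k
    exact mul_nonneg (mul_nonneg (by positivity) (pow_nonneg hb0 _)) (convPow_nonneg h0 _ _)
  · intro k
    show (1 / m) * (1 - 1 / m) ^ k * convPow μ (k + 1) n ≤ (1/m) * (1 - 1/m) ^ k
    calc (1 / m) * (1 - 1 / m) ^ k * convPow μ (k + 1) n
        ≤ (1 / m) * (1 - 1 / m) ^ k * 1 := by
          apply mul_le_mul_of_nonneg_left (convPow_le_one h0 h1 _ _)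
          exact mul_nonneg (by positivity) (pow_nonneg hb0 _)
      _ = (1/m) * (1 - 1/m) ^ k := by ring
  · exact (summable_geometric_of_lt_one hb0 hb1).mul_left _

lemma DRmix_funcEq (hm : 1 < m) (h0 : ∀ n, 0 ≤ μ n)
    (h1 : ∀ N, ∑ j ∈ Finset.range N, μ j ≤ 1) (n : ℕ) :
    DRmixture m μ n = (1/m) * μ n + (1 - 1/m) * convOp (DRmixture m μ) μ n := by
  have hsum := DRmix_summable hm h0 h1
  unfold DRmixture
  rw [Summable.tsum_eq_zero_add (hsum n)]
  have h00 : (1 / m) * (1 - 1 / m) ^ 0 * convPow μ (0 + 1) n = (1/m) * μ n := by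
    rw [convPow_one]; ring
  rw [h00]
  congr 1
  have hstep : ∀ k, (1 / m) * (1 - 1 / m) ^ (k + 1) * convPow μ (k + 1 + 1) n
      = ∑ i ∈ Finset.range (n+1),
          (1 - 1/m) * ((1 / m) * (1 - 1 / m) ^ k * convPow μ (k + 1) i * μ (n - i)) := by
    intro k
    have : convPow μ (k + 1 + 1) n = ∑ i ∈ Finset.range (n+1), convPow μ (k+1) i * μ (n - i) := rfl
    rw [this, Finset.mul_sum]
    exact Finset.sum_congr rfl fun i _ => by ring
  rw [tsum_congr hstep]
  have hsummi : ∀ i ∈ Finset.range (n+1), Summable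
      (fun k => (1 - 1/m) * ((1 / m) * (1 - 1 / m) ^ k * convPow μ (k + 1) i * μ (n - i))) := by
    intro i _
    exact (((hsum i).mul_right (μ (n - i))).mul_left (1 - 1/m))
  rw [Summable.tsum_finsetSum hsummi]
  unfold convOp
  rw [Finset.mul_sum]
  apply Finset.sum_congr rfl
  intro i _
  rw [tsum_mul_left, tsum_mul_right]

end FuncEq

lemma conv_unique {a b : ℝ} {μ f g : ℕ → ℝ} (hb : 0 ≤ b) (hbp : b * μ 0 < 1)
    (hf : ∀ n, f n = a * μ n + b * convOp f μ n)
    (hg : ∀ n, g n = a * μ n + b * convOp g μ n) : ∀ n, f n = g n := by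
  intro n
  induction n using Nat.strong_induction_on with
  | _ n ih =>
    have h1 : convOp f μ n = convOp g μ n + (f n - g n) * μ 0 := by
      unfold convOp
      rw [Finset.sum_range_succ, Finset.sum_range_succ,
        Finset.sum_congr rfl (fun i hi => by rw [ih i (Finset.mem_range.mp hi)] :
          ∀ i ∈ Finset.range n, f i * μ (n - i) = g i * μ (n - i))]
      simp
      ring
    have e1 := hf n
    rw [h1] at e1
    have e2 := hg n
    have h2 : (f n - g n) * (1 - b * μ 0) = 0 := by linear_combination e1 - e2
    have h3 : (1 : ℝ) - b * μ 0 ≠ 0 := by linarith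
    have := mul_eq_zero.mp h2
    rcases this with h | h
    · linarith
    · exact absurd h h3

set_option maxHeartbeats 1600000 in
/-- The core algebraic identity: the candidate geometric-type law satisfies the
same renewal equation (multiplied by `m`). -/
lemma key_identity {m r p : ℝ} (hm : 1 < m) (hr : r ∈ Set.Ioo (0:ℝ) 1)
    (hp : p ∈ Set.Ioo (0:ℝ) 1) (n : ℕ) :
    m * geomType (r / (m - (m-1)*p)) (p / (m - (m-1)*p)) n
      = geomType r p n
        + (m - 1) * convOp (geomType (r / (m - (m-1)*p)) (p / (m - (m-1)*p))) (geomType r p) n := by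
  obtain ⟨hr0, hr1⟩ := hr; obtain ⟨hp0, hp1⟩ := hp
  set A : ℝ := m - (m-1)*p with hA
  have hA1 : 1 < A := by nlinarith
  have hA0 : A ≠ 0 := by linarith
  have hrr : r - r / A ≠ 0 := by
    have h : r - r / A = r * (A - 1) / A := by field_simp
    rw [h]
    exact ne_of_gt (div_pos (by nlinarith) (by linarith))
  cases n with
  | zero =>
    have hc : convOp (geomType (r/A) (p/A)) (geomType r p) 0 = (p/A) * p := by
      simp [convOp, geomType]
    rw [hc]
    show m * geomType (r/A) (p/A) 0 = geomType r p 0 + (m-1) * ((p/A)*p)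
    simp only [geomType, if_pos rfl, ↓reduceIte]
    field_simp
    rw [hA]
    ring
  | succ j =>
    have hc : convOp (geomType (r/A) (p/A)) (geomType r p) (j+1)
        = (p/A) * ((1-p)*r*(1-r)^j)
          + ((1-p/A)*(r/A)*(1-r/A)^j) * p
          + (1-p/A)*(r/A)*((1-p)*r) *
              ∑ i ∈ Finset.range j, (1-r/A)^i * (1-r)^(j-1-i) := by
      unfold convOp
      rw [Finset.sum_range_succ, Finset.sum_range_succ']
      have hF0 : geomType (r/A) (p/A) 0 * geomType r p (j+1-0) = (p/A) * ((1-p)*r*(1-r)^j) := by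
        simp [geomType]
      have hFtop : geomType (r/A) (p/A) (j+1) * geomType r p (j+1-(j+1))
          = ((1-p/A)*(r/A)*(1-r/A)^j) * p := by
        simp [geomType]
      have hmid : ∀ i ∈ Finset.range j,
          geomType (r/A) (p/A) (i+1) * geomType r p (j+1-(i+1))
            = (1-p/A)*(r/A)*((1-p)*r) * ((1-r/A)^i * (1-r)^(j-1-i)) := by
        intro i hi
        have hij : i < j := Finset.mem_range.mp hi
        have h1 : j + 1 - (i + 1) = j - i := by omega
        have h2 : j - i ≠ 0 := by omega
        have h3 : j - i - 1 = j - 1 - i := by omega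
        rw [h1]
        simp only [geomType, if_neg (Nat.succ_ne_zero i), if_neg h2,
          Nat.add_sub_cancel, h3]
        ring
      rw [hF0, hFtop, Finset.sum_congr rfl hmid, ← Finset.mul_sum]
      ring
    rw [hc]
    have hgl : geomType (r/A) (p/A) (j+1) = (1-p/A)*(r/A)*(1-r/A)^j := by simp [geomType]
    have hgr : geomType r p (j+1) = (1-p)*r*(1-r)^j := by simp [geomType]
    rw [hgl, hgr]
    have hS := geom_sum₂_mul (1 - r/A) (1 - r) j
    have hden : (1 - r/A) - (1 - r) = r - r/A := by ring
    rw [hden] at hS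
    have hSval : ∑ i ∈ Finset.range j, (1-r/A)^i * (1-r)^(j-1-i)
        = ((1 - r/A)^j - (1-r)^j) / (r - r/A) := by
      rw [eq_div_iff hrr]
      exact hS
    rw [hSval]
    generalize (1 - r/A)^j = X
    generalize (1 - r)^j = Y
    rw [hA]
    have hA0' : m - (m-1)*p ≠ 0 := by rw [← hA]; exact hA0
    have hr0' : r ≠ 0 := ne_of_gt hr0
    have hA1' : m - (m-1)*p - 1 ≠ 0 := by nlinarith
    have hsub : r - r / (m - (m-1)*p) = r * (m - (m-1)*p - 1) / (m - (m-1)*p) := by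
      field_simp
    rw [hsub]
    have hA0'' : m - p*(m-1) ≠ 0 := by rw [mul_comm]; exact hA0'
    have hA1'' : m - p*(m-1) - 1 ≠ 0 := by rw [mul_comm]; exact hA1'
    field_simp
    ring

lemma DRmixture_geom {m r p : ℝ} (hm : 1 < m) (hr : r ∈ Set.Ioo (0:ℝ) 1)
    (hp : p ∈ Set.Ioo (0:ℝ) 1) :
    ∀ n, DRmixture m (geomType r p) n
      = geomType (r / (m - (m-1)*p)) (p / (m - (m-1)*p)) n := by
  have h0 := geomType_nonneg hr hp
  have h1 := geomType_partial_le_one hr hp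
  have hm0 : (0:ℝ) < m := by linarith
  have hb : (0:ℝ) ≤ 1 - 1/m := by
    have : 1/m < 1 := by rw [div_lt_one hm0]; linarith
    linarith
  have hbp : (1 - 1/m) * geomType r p 0 < 1 := by
    have hg0 : geomType r p 0 = p := by simp [geomType]
    have hb1 : 1 - 1/m < 1 := by
      have := one_div_pos.mpr hm0
      linarith
    rw [hg0]
    nlinarith [hp.1, hp.2]
  refine conv_unique hb hbp (DRmix_funcEq hm h0 h1) ?_
  intro n
  have hk := key_identity hm hr hp n
  have hm' : m ≠ 0 := ne_of_gt hm0
  field_simp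
  linear_combination hk

lemma DRstep_geom {m r p : ℝ} (hm : 1 < m) (hr : r ∈ Set.Ioo (0:ℝ) 1)
    (hp : p ∈ Set.Ioo (0:ℝ) 1) :
    DRstep m (geomType r p)
      = geomType (r / (m - (m-1)*p))
          (1 - (1 - r / (m - (m-1)*p)) * (1 - p / (m - (m-1)*p))) := by
  have hmix := DRmixture_geom hm hr hp
  funext n
  unfold DRstep
  cases n with
  | zero =>
    rw [if_pos rfl, hmix 0, hmix 1]
    simp [geomType]
    ring
  | succ k =>
    rw [if_neg (Nat.succ_ne_zero k), hmix (k+1+1)]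
    have e1 : k + 1 + 1 - 1 = k + 1 := rfl
    have e2 : k + 1 - 1 = k := rfl
    simp only [geomType, if_neg (Nat.succ_ne_zero (k+1)), if_neg (Nat.succ_ne_zero k), e1, e2,
      pow_succ]
    ring

end Aux

/-- If `μ_0 = G(r_0, p_0)` with `(r_0,p_0) ∈ (0,1)²` and
`μ_{n+1} = T(μ_n)` for the Derrida–Retaux transition with geometric offspring of
mean `m > 1`, then `μ_n = G(r_n, p_n)` for all `n`, where `(r_n, p_n)` satisfy the
recursion `r_{n+1} = r_n/(m - (m-1) p_n)`,
`p_{n+1} = 1 - (1 - r_{n+1})(1 - r_{n+1} p_n / r_n)`, and all pairs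
`(r_n, p_n)` remain in `(0,1) × (0,1)`. -/
theorem stmt1 (m : ℝ) (hm : 1 < m) (r₀ p₀ : ℝ)
    (hr₀ : r₀ ∈ Set.Ioo (0 : ℝ) 1) (hp₀ : p₀ ∈ Set.Ioo (0 : ℝ) 1)
    (μ : ℕ → ℕ → ℝ)
    (hμ0 : μ 0 = geomType r₀ p₀)
    (hμ : ∀ n, μ (n + 1) = DRstep m (μ n))
    (r p : ℕ → ℝ) (hr : r 0 = r₀) (hp : p 0 = p₀)
    (hrec_r : ∀ n, r (n + 1) = r n / (m - (m - 1) * p n))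
    (hrec_p : ∀ n, p (n + 1) = 1 - (1 - r (n + 1)) * (1 - r (n + 1) * p n / r n)) :
    (∀ n, r n ∈ Set.Ioo (0 : ℝ) 1 ∧ p n ∈ Set.Ioo (0 : ℝ) 1) ∧
    (∀ n, μ n = geomType (r n) (p n)) := by
  have main : ∀ n, (r n ∈ Set.Ioo (0:ℝ) 1 ∧ p n ∈ Set.Ioo (0:ℝ) 1)
      ∧ μ n = geomType (r n) (p n) := by
    intro n
    induction n with
    | zero => exact ⟨⟨hr ▸ hr₀, hp ▸ hp₀⟩, by rw [hμ0, hr, hp]⟩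
    | succ n ih =>
      obtain ⟨⟨⟨hrn0, hrn1⟩, hpn0, hpn1⟩, hμn⟩ := ih
      have hA1 : 1 < m - (m-1)*p n := by nlinarith
      have hrsucc := hrec_r n
      have hrIoo : r (n+1) ∈ Set.Ioo (0:ℝ) 1 := by
        rw [hrsucc]
        refine ⟨div_pos hrn0 (by linarith), ?_⟩
        rw [div_lt_one (by linarith)]
        linarith
      have hpdiv : r (n+1) * p n / r n = p n / (m - (m-1)*p n) := by
        rw [hrsucc]
        field_simp
      have hpsucc : p (n+1) = 1 - (1 - r (n+1)) * (1 - p n / (m-(m-1)*p n)) := by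
        rw [hrec_p n, hpdiv]
      have hpAIoo : p n / (m-(m-1)*p n) ∈ Set.Ioo (0:ℝ) 1 := by
        refine ⟨div_pos hpn0 (by linarith), ?_⟩
        rw [div_lt_one (by linarith)]
        linarith
      have hpIoo : p (n+1) ∈ Set.Ioo (0:ℝ) 1 := by
        rw [hpsucc]
        obtain ⟨hx0, hx1⟩ := hrIoo
        obtain ⟨hy0, hy1⟩ := hpAIoo
        constructor
        · nlinarith
        · nlinarith
      refine ⟨⟨hrIoo, hpIoo⟩, ?_⟩
      rw [hμ n, hμn, DRstep_geom hm ⟨hrn0, hrn1⟩ ⟨hpn0, hpn1⟩, ← hrsucc, ← hpsucc]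
  exact ⟨fun n => (main n).1, fun n => (main n).2⟩
end

section
/- For every n ≥ 0, m^{-n} (1 - p_n)/r_n = r_0^{-1} (1 - p_n) ∏_{i=0}^{n-1} [1 - (m-1) p_i / m] and also m^{-n} (1 - p_n)/r_n = r_0^{-1} (1 - p_0) ∏_{i=1}^{n} (1 - r_i). -/
open Filter Finset Topology

/-- For the Derrida–Retaux parameter recursion, for every `n ≥ 0`:
`m^{-n} (1 - p_n)/r_n = r_0^{-1}(1 - p_n) ∏_{i=0}^{n-1} [1 - (m-1) p_i / m]`
and `m^{-n} (1 - p_n)/r_n = r_0^{-1}(1 - p_0) ∏_{i=1}^{n} (1 - r_i)`. -/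
theorem stmt2 (m : ℝ) (hm : 1 < m) (r p : ℕ → ℝ)
    (hmem : ∀ n, r n ∈ Set.Ioo (0 : ℝ) 1 ∧ p n ∈ Set.Ioo (0 : ℝ) 1)
    (hrec_r : ∀ n, r (n + 1) = r n / (m - (m - 1) * p n))
    (hrec_p : ∀ n, p (n + 1) = 1 - (1 - r (n + 1)) * (1 - r (n + 1) * p n / r n)) :
    ∀ n : ℕ,
      (m ^ n)⁻¹ * ((1 - p n) / r n) =
        (r 0)⁻¹ * (1 - p n) * ∏ i ∈ Finset.range n, (1 - (m - 1) * p i / m) ∧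
      (m ^ n)⁻¹ * ((1 - p n) / r n) =
        (r 0)⁻¹ * (1 - p 0) * ∏ i ∈ Finset.range n, (1 - r (i + 1)) := by
  have hm0 : (0 : ℝ) < m := by linarith
  have hden : ∀ n, 0 < m - (m - 1) * p n := by
    intro n
    have hp := (hmem n).2
    nlinarith [hp.1, hp.2]
  have haux : ∀ n, (m ^ n)⁻¹ / r n =
      (r 0)⁻¹ * ∏ i ∈ Finset.range n, (1 - (m - 1) * p i / m) := by
    intro n
    induction n with
    | zero => simp
    | succ n ih =>
      rw [Finset.prod_range_succ, ← mul_assoc, ← ih, hrec_r n]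
      have hrn : r n ≠ 0 := ne_of_gt (hmem n).1.1
      have hd : m - (m - 1) * p n ≠ 0 := ne_of_gt (hden n)
      field_simp
      ring_nf
  have key : ∀ n, (m ^ (n + 1))⁻¹ * ((1 - p (n + 1)) / r (n + 1))
      = ((m ^ n)⁻¹ * ((1 - p n) / r n)) * (1 - r (n + 1)) := by
    intro n
    rw [hrec_p n, hrec_r n]
    have hrn : r n ≠ 0 := ne_of_gt (hmem n).1.1
    have hd : m - (m - 1) * p n ≠ 0 := ne_of_gt (hden n)
    field_simp
    ring
  intro n
  constructor
  · have := haux n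
    calc (m ^ n)⁻¹ * ((1 - p n) / r n) = ((m ^ n)⁻¹ / r n) * (1 - p n) := by ring
      _ = _ := by rw [haux n]; ring
  · induction n with
    | zero => simp; ring
    | succ n ih =>
      rw [Finset.prod_range_succ, key n, ih]
      ring
end

section
/- For every n ≥ 0, (1/r_{n+2} - 1/r_{n+1}) = m (1 - r_{n+1}) (1/r_{n+1} - 1/r_n). -/
/-!
Write `dₙ = m - (m - 1) pₙ`, so that `rₙ₊₁ = rₙ / dₙ`. Then the increment of `1 / r` is
`1 / rₙ₊₁ - 1 / rₙ = (dₙ - 1) / rₙ = (m - 1)(1 - pₙ) / rₙ`, and since `rₙ₊₁ pₙ / rₙ = pₙ / dₙ`,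
the recursion for `p` gives `1 - pₙ₊₁ = m (1 - rₙ₊₁)(1 - pₙ) / dₙ`. Substituting the second
formula into the first one at index `n + 1`, and using `dₙ rₙ₊₁ = rₙ`, gives the identity.
-/

section DerridaRetaux

variable {K : Type*} [Field K] {m r p r' p' : K}

theorem one_div_sub_one_div_eq_of_eq_div (hr' : r' ≠ 0)
    (h : r' = r / (m - (m - 1) * p)) :
    1 / r' - 1 / r = (m - 1) * (1 - p) / r := by
  have hd : m - (m - 1) * p ≠ 0 := by intro hd; simp [h, hd] at hr'
  have hr : r ≠ 0 := by rintro rfl; simp [h] at hr'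
  rw [h]
  field_simp
  ring

theorem one_sub_eq_of_eq_div (hr : r ≠ 0) (hd : m - (m - 1) * p ≠ 0)
    (hr' : r' = r / (m - (m - 1) * p)) (hp' : p' = 1 - (1 - r') * (1 - r' * p / r)) :
    1 - p' = m * (1 - r') * (1 - p) / (m - (m - 1) * p) := by
  have hratio : r' * p / r = p / (m - (m - 1) * p) := by
    rw [hr']
    field_simp
  rw [hp', hratio, one_sub_div hd, ← mul_div_assoc]
  ring

end DerridaRetaux

theorem stmt3_general (m : ℝ) (r p : ℕ → ℝ)
    (hmem : ∀ n, r n ∈ Set.Ioo (0 : ℝ) 1 ∧ p n ∈ Set.Ioo (0 : ℝ) 1)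
    (hrec_r : ∀ n, r (n + 1) = r n / (m - (m - 1) * p n))
    (hrec_p : ∀ n, p (n + 1) = 1 - (1 - r (n + 1)) * (1 - r (n + 1) * p n / r n)) :
    ∀ n : ℕ,
      1 / r (n + 2) - 1 / r (n + 1) = m * (1 - r (n + 1)) * (1 / r (n + 1) - 1 / r n) := by
  intro n
  have hr : ∀ k, r k ≠ 0 := fun k => (hmem k).1.1.ne'
  have hd : m - (m - 1) * p n ≠ 0 := by
    intro hd
    simpa [hrec_r n, hd] using hr (n + 1)
  rw [one_div_sub_one_div_eq_of_eq_div (hr (n + 2)) (hrec_r (n + 1)),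
    one_div_sub_one_div_eq_of_eq_div (hr (n + 1)) (hrec_r n),
    one_sub_eq_of_eq_div (hr n) hd (hrec_r n) (hrec_p n), hrec_r n]
  field_simp

/-- For the Derrida–Retaux parameter recursion, for every `n ≥ 0`:
`(1/r_{n+2} - 1/r_{n+1}) = m (1 - r_{n+1}) (1/r_{n+1} - 1/r_n)`. -/
theorem stmt3 (m : ℝ) (hm : 1 < m) (r p : ℕ → ℝ)
    (hmem : ∀ n, r n ∈ Set.Ioo (0 : ℝ) 1 ∧ p n ∈ Set.Ioo (0 : ℝ) 1)
    (hrec_r : ∀ n, r (n + 1) = r n / (m - (m - 1) * p n))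
    (hrec_p : ∀ n, p (n + 1) = 1 - (1 - r (n + 1)) * (1 - r (n + 1) * p n / r n)) :
    ∀ n : ℕ,
      1 / r (n + 2) - 1 / r (n + 1) = m * (1 - r (n + 1)) * (1 / r (n + 1) - 1 / r n) :=
  stmt3_general m r p hmem hrec_r hrec_p
end

section
/- The limits r_* := lim_{n→∞} r_n and p_* := lim_{n→∞} p_n exist, and exactly one of the following holds: (1) r_* = 0 and p_* = 0; (2) 1 - 1/m ≤ r_* < 1 and p_* = 1. -/
open Filter Finset Topology

/-- Monotonicity of the update map `(a, x) ↦ a + (1-a) * (x / (m - (m-1)x))`. -/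
lemma stmt5_mono_step (m a b x y : ℝ) (hm : 1 < m) (ha : 0 ≤ a) (hab : a ≤ b)
    (hb : b ≤ 1) (hx : 0 ≤ x) (hxy : x ≤ y) (hy : y < 1) :
    a + (1 - a) * (x / (m - (m - 1) * x)) ≤ b + (1 - b) * (y / (m - (m - 1) * y)) := by
  have hDy : 1 < m - (m - 1) * y := by nlinarith
  have hDx : m - (m - 1) * y ≤ m - (m - 1) * x := by nlinarith
  have hg : x / (m - (m - 1) * x) ≤ y / (m - (m - 1) * y) :=
    div_le_div₀ (le_trans hx hxy) hxy (by linarith) hDx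
  have hg1 : y / (m - (m - 1) * y) ≤ 1 := by
    rw [div_le_one (by linarith)]; nlinarith
  have hg0 : 0 ≤ x / (m - (m - 1) * x) := div_nonneg hx (by linarith)
  set gx := x / (m - (m - 1) * x) with hgx
  set gy := y / (m - (m - 1) * y) with hgy
  nlinarith [mul_nonneg (sub_nonneg.2 hab) (sub_nonneg.2 (hg.trans hg1)),
    mul_nonneg (sub_nonneg.2 hb) (sub_nonneg.2 hg)]

/-- For the Derrida–Retaux parameter recursion, the limits
`r_* = lim r_n` and `p_* = lim p_n` exist, and exactly one of the following holds:
(1) `r_* = 0` and `p_* = 0`; (2) `1 - 1/m ≤ r_* < 1` and `p_* = 1`. -/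
theorem stmt5 (m : ℝ) (hm : 1 < m) (r p : ℕ → ℝ)
    (hr0 : r 0 ∈ Set.Ioo (0 : ℝ) 1) (hp0 : p 0 ∈ Set.Ioo (0 : ℝ) 1)
    (hmem : ∀ n, r n ∈ Set.Ioo (0 : ℝ) 1 ∧ p n ∈ Set.Ioo (0 : ℝ) 1)
    (hrec_r : ∀ n, r (n + 1) = r n / (m - (m - 1) * p n))
    (hrec_p : ∀ n, p (n + 1) = 1 - (1 - r (n + 1)) * (1 - r (n + 1) * p n / r n)) :
    ∃ rs ps : ℝ, Tendsto r atTop (𝓝 rs) ∧ Tendsto p atTop (𝓝 ps) ∧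
      Xor' (rs = 0 ∧ ps = 0) (1 - 1 / m ≤ rs ∧ rs < 1 ∧ ps = 1) := by
  have hrpos : ∀ n, 0 < r n := fun n => (hmem n).1.1
  have hrlt : ∀ n, r n < 1 := fun n => (hmem n).1.2
  have hppos : ∀ n, 0 < p n := fun n => (hmem n).2.1
  have hplt : ∀ n, p n < 1 := fun n => (hmem n).2.2
  have hD : ∀ n, 1 < m - (m - 1) * p n := by
    intro n; nlinarith [hplt n, hppos n]
  -- the clean recursion for p
  have hp' : ∀ n, p (n + 1) = r (n + 1) + (1 - r (n + 1)) * (p n / (m - (m - 1) * p n)) := by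
    intro n
    have h0 : r n ≠ 0 := (hrpos n).ne'
    have hDne : m - (m - 1) * p n ≠ 0 := by linarith [hD n]
    have h1 : r (n + 1) * p n / r n = p n / (m - (m - 1) * p n) := by
      rw [hrec_r n]
      field_simp
    rw [hrec_p n, h1]; ring
  -- r is strictly decreasing
  have hrdec : ∀ n, r (n + 1) < r n := by
    intro n
    rw [hrec_r n]
    exact div_lt_self (hrpos n) (hD n)
  have hr_anti : Antitone r := antitone_nat_of_succ_le fun n => (hrdec n).le
  -- r converges
  have hr_bdd : BddBelow (Set.range r) := ⟨0, fun x ⟨n, hn⟩ => hn ▸ (hrpos n).le⟩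
  have hr_tendsto : Tendsto r atTop (𝓝 (⨅ n, r n)) := tendsto_atTop_ciInf hr_anti hr_bdd
  set rs := ⨅ n, r n with hrs_def
  -- p converges
  have hp_conv : ∃ ps, Tendsto p atTop (𝓝 ps) := by
    by_cases hc : ∀ n, p n ≤ p (n + 1)
    · have hmono : Monotone p := monotone_nat_of_le_succ hc
      exact ⟨⨆ n, p n, tendsto_atTop_ciSup hmono ⟨1, fun x ⟨n, hn⟩ => hn ▸ (hplt n).le⟩⟩
    · push_neg at hc
      obtain ⟨N, hN⟩ := hc
      have hdec : ∀ n, N ≤ n → p (n + 1) ≤ p n := by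
        intro n hn
        induction n with
        | zero =>
          have : N = 0 := Nat.le_zero.mp hn
          subst this; exact hN.le
        | succ k ih =>
          rcases Nat.lt_or_ge N (k + 1) with h | h
          · have hk : N ≤ k := Nat.lt_succ_iff.mp h
            have hstep : p (k + 1) ≤ p k := ih hk
            have hms := stmt5_mono_step m (r (k + 1 + 1)) (r (k + 1)) (p (k + 1)) (p k) hm
              (hrpos (k + 1 + 1)).le (hrdec (k + 1)).le (hrlt (k + 1)).le
              (hppos (k + 1)).le hstep (hplt k)
            rw [← hp' (k + 1), ← hp' k] at hms
            exact hms
          · have : N = k + 1 := le_antisymm hn h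
            subst this; exact hN.le
      set q : ℕ → ℝ := fun k => p (k + N) with hq_def
      have hq_anti : Antitone q := antitone_nat_of_succ_le fun k => by
        have h := hdec (k + N) (Nat.le_add_left N k)
        show p (k + 1 + N) ≤ p (k + N)
        rwa [Nat.add_right_comm k 1 N]
      have hq_bdd : BddBelow (Set.range q) := ⟨0, fun x ⟨n, hn⟩ => hn ▸ (hppos (n + N)).le⟩
      have := tendsto_atTop_ciInf hq_anti hq_bdd
      exact ⟨⨅ k, q k, (tendsto_add_atTop_iff_nat N).mp this⟩
  obtain ⟨ps, hp_tendsto⟩ := hp_conv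
  -- basic bounds on the limits
  have hrs0 : 0 ≤ rs := ge_of_tendsto hr_tendsto (Eventually.of_forall fun n => (hrpos n).le)
  have hrs1 : rs < 1 := lt_of_le_of_lt (ciInf_le hr_bdd 0) hr0.2
  have hps0 : 0 ≤ ps := ge_of_tendsto hp_tendsto (Eventually.of_forall fun n => (hppos n).le)
  have hps1 : ps ≤ 1 := le_of_tendsto hp_tendsto (Eventually.of_forall fun n => (hplt n).le)
  -- denominator limit
  have hD_tendsto : Tendsto (fun n => m - (m - 1) * p n) atTop (𝓝 (m - (m - 1) * ps)) :=
    tendsto_const_nhds.sub (tendsto_const_nhds.mul hp_tendsto)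
  have hD_pos : (1 : ℝ) ≤ m - (m - 1) * ps := by nlinarith
  have hD_ne : m - (m - 1) * ps ≠ 0 := by linarith
  -- limit equation for r
  have hr_shift : Tendsto (fun n => r (n + 1)) atTop (𝓝 rs) :=
    (tendsto_add_atTop_iff_nat 1).mpr hr_tendsto
  have hr_eq : rs = rs / (m - (m - 1) * ps) := by
    have h2 : Tendsto (fun n => r n / (m - (m - 1) * p n)) atTop
        (𝓝 (rs / (m - (m - 1) * ps))) := hr_tendsto.div hD_tendsto hD_ne
    have h3 : Tendsto (fun n => r (n + 1)) atTop (𝓝 (rs / (m - (m - 1) * ps))) := by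
      simpa only [← hrec_r] using h2
    exact tendsto_nhds_unique hr_shift h3
  -- key lemma: if ps = 1 then m * (1 - rs) ≤ 1
  have hkey : ps = 1 → m * (1 - rs) ≤ 1 := by
    intro hps
    by_contra hcon
    push_neg at hcon
    -- ratio of u_n = 1 - p_n tends to m (1 - rs) > 1
    have hu_rec : ∀ n, 1 - p (n + 1) =
        ((1 - r (n + 1)) * m / (m - (m - 1) * p n)) * (1 - p n) := by
      intro n
      have hDn := hD n
      have hDn' : m - (m - 1) * p n ≠ 0 := by linarith
      rw [hp' n]
      rw [div_mul_eq_mul_div, eq_div_iff hDn']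
      have hX : p n / (m - (m - 1) * p n) * (m - (m - 1) * p n) = p n := div_mul_cancel₀ _ hDn'
      linear_combination (-(1 - r (n + 1))) * hX
    have hratio : Tendsto (fun n => (1 - r (n + 1)) * m / (m - (m - 1) * p n)) atTop
        (𝓝 ((1 - rs) * m / (m - (m - 1) * ps))) :=
      ((tendsto_const_nhds.sub hr_shift).mul tendsto_const_nhds).div hD_tendsto hD_ne
    have hlim_gt : 1 < (1 - rs) * m / (m - (m - 1) * ps) := by
      rw [hps]
      have : m - (m - 1) * (1 : ℝ) = 1 := by ring
      rw [this, div_one]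
      nlinarith
    have hev : ∀ᶠ n in atTop, 1 < (1 - r (n + 1)) * m / (m - (m - 1) * p n) :=
      hratio.eventually (eventually_gt_nhds hlim_gt)
    obtain ⟨N, hN⟩ := eventually_atTop.mp hev
    have hmono : ∀ n, N ≤ n → 1 - p N ≤ 1 - p n := by
      intro n hn
      induction n with
      | zero =>
        have : N = 0 := Nat.le_zero.mp hn
        subst this; exact le_refl _
      | succ k ih =>
        rcases Nat.lt_or_ge N (k + 1) with h | h
        · have hk : N ≤ k := Nat.lt_succ_iff.mp h
          have h1 : 1 - p N ≤ 1 - p k := ih hk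
          have h2 : 1 - p k ≤ 1 - p (k + 1) := by
            rw [hu_rec k]
            nlinarith [hN k hk, hplt k, hppos k]
          linarith
        · have : N = k + 1 := le_antisymm hn h
          subst this; exact le_refl _
      -- limit of 1 - p is 0 but it's eventually ≥ 1 - p N > 0
    have hu_tendsto : Tendsto (fun n => 1 - p n) atTop (𝓝 (1 - ps)) :=
      tendsto_const_nhds.sub hp_tendsto
    have h0 : 1 - p N ≤ 1 - ps :=
      ge_of_tendsto hu_tendsto (eventually_atTop.mpr ⟨N, hmono⟩)
    rw [hps] at h0
    linarith [hplt N]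
  by_cases hps : ps = 1
  · -- case 2
    refine ⟨rs, ps, hr_tendsto, hp_tendsto, Or.inr ⟨⟨?_, hrs1, hps⟩, ?_⟩⟩
    · have hk := hkey hps
      have hm0 : (0 : ℝ) < m := by linarith
      have hmi : 1 - rs ≤ 1 / m := by
        rw [le_div_iff₀ hm0]; nlinarith
      linarith
    · rintro ⟨_, hps0'⟩
      rw [hps] at hps0'
      exact one_ne_zero hps0'
  · -- case 1 : rs = 0 and then ps = 0
    have hpslt : ps < 1 := lt_of_le_of_ne hps1 hps
    have hrs_zero : rs = 0 := by
      have hD_gt : 1 < m - (m - 1) * ps := by nlinarith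
      have heq := hr_eq
      rw [eq_div_iff hD_ne] at heq
      by_contra h
      have hrspos : 0 < rs := lt_of_le_of_ne hrs0 (Ne.symm h)
      nlinarith [mul_pos hrspos (sub_pos.2 hD_gt)]
    have hps_zero : ps = 0 := by
      have hp_shift : Tendsto (fun n => p (n + 1)) atTop (𝓝 ps) :=
        (tendsto_add_atTop_iff_nat 1).mpr hp_tendsto
      have h2 : Tendsto (fun n => r (n + 1) + (1 - r (n + 1)) * (p n / (m - (m - 1) * p n)))
          atTop (𝓝 (rs + (1 - rs) * (ps / (m - (m - 1) * ps)))) :=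
        hr_shift.add ((tendsto_const_nhds.sub hr_shift).mul (hp_tendsto.div hD_tendsto hD_ne))
      have h3 : Tendsto (fun n => p (n + 1)) atTop
          (𝓝 (rs + (1 - rs) * (ps / (m - (m - 1) * ps)))) := by
        simpa only [← hp'] using h2
      have heq : ps = rs + (1 - rs) * (ps / (m - (m - 1) * ps)) :=
        tendsto_nhds_unique hp_shift h3
      rw [hrs_zero] at heq
      have heq' : ps = ps / (m - (m - 1) * ps) := by linarith [heq]
      rw [eq_div_iff hD_ne] at heq'
      by_contra h
      have hpspos : 0 < ps := lt_of_le_of_ne hps0 (Ne.symm h)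
      nlinarith [mul_pos hpspos (mul_pos (sub_pos.2 hm) (sub_pos.2 hpslt))]
    refine ⟨rs, ps, hr_tendsto, hp_tendsto, Or.inl ⟨⟨hrs_zero, hps_zero⟩, ?_⟩⟩
    rintro ⟨_, _, hps1'⟩
    rw [hps_zero] at hps1'
    exact zero_ne_one hps1'
end

section
/- If r_0 ≤ 1 - 1/m, then r_n → 0 and p_n → 0 as n → ∞ (i.e., the model is in the supercritical regime). -/
open Filter Finset Topology

/-- For the Derrida–Retaux parameter recursion, if
`r_0 ≤ 1 - 1/m`, then `r_n → 0` and `p_n → 0` as `n → ∞`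
(the model is in the supercritical regime). -/
theorem stmt6 (m : ℝ) (hm : 1 < m) (r p : ℕ → ℝ)
    (hmem : ∀ n, r n ∈ Set.Ioo (0 : ℝ) 1 ∧ p n ∈ Set.Ioo (0 : ℝ) 1)
    (hdec : ∀ n, r (n + 1) < r n)
    (hrec_r : ∀ n, r (n + 1) = r n / (m - (m - 1) * p n))
    (hrec_p : ∀ n, p (n + 1) = 1 - (1 - r (n + 1)) * (1 - r (n + 1) * p n / r n))
    (hr0 : r 0 ≤ 1 - 1 / m) :
    Tendsto r atTop (𝓝 0) ∧ Tendsto p atTop (𝓝 0) := by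
  have hm0 : (0 : ℝ) < m := lt_trans one_pos hm
  have hm1 : (0 : ℝ) < m - 1 := by linarith
  have hrpos : ∀ n, 0 < r n := fun n => (hmem n).1.1
  have hrlt : ∀ n, r n < 1 := fun n => (hmem n).1.2
  have hppos : ∀ n, 0 < p n := fun n => (hmem n).2.1
  have hplt : ∀ n, p n < 1 := fun n => (hmem n).2.2
  have hD : ∀ n, 1 < m - (m - 1) * p n := by
    intro n; nlinarith [hplt n, hppos n]
  have hDpos : ∀ n, 0 < m - (m - 1) * p n := fun n => lt_trans one_pos (hD n)
  -- rewrite the p-recursion in a convenient form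
  have hpform : ∀ n, p (n + 1)
      = r (n + 1) + (1 - r (n + 1)) * (p n / (m - (m - 1) * p n)) := by
    intro n
    have h1 : r (n + 1) * p n / r n = p n / (m - (m - 1) * p n) := by
      rw [hrec_r n]
      have h2 := (hrpos n).ne'
      have h3 := (hDpos n).ne'
      field_simp
    rw [hrec_p n, h1]; ring
  -- r 1 < 1 - 1/m, so c := (1 - r 1) * m > 1
  have hr1 : r 1 < 1 - 1 / m := lt_of_lt_of_le (hdec 0) hr0
  have hc : 1 < (1 - r 1) * m := by
    have h1m : 1 / m * m = 1 := by field_simp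
    nlinarith [hr1]
  set ustar : ℝ := ((1 - r 1) * m - 1) / (m - 1) with hustar
  have hustarpos : 0 < ustar := div_pos (by linarith) hm1
  set δ : ℝ := min (1 - p 1) ustar with hδdef
  have hδpos : 0 < δ := lt_min (by linarith [hplt 1]) hustarpos
  have hδustar : δ ≤ ustar := min_le_right _ _
  have hδc : 1 + (m - 1) * δ ≤ (1 - r 1) * m := by
    have h2 : δ * (m - 1) ≤ (1 - r 1) * m - 1 := by
      calc δ * (m - 1) ≤ ustar * (m - 1) := by nlinarith
        _ = (1 - r 1) * m - 1 := by rw [hustar]; field_simp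
    linarith
  -- r is decreasing: r (k+1) ≤ r 1
  have hrle1 : ∀ k, r (k + 1) ≤ r 1 := by
    intro k
    induction k with
    | zero => exact le_refl _
    | succ k ih => exact le_trans (le_of_lt (hdec (k + 1))) ih
  -- key invariant : δ ≤ 1 - p (k+1)
  have hkey : ∀ k, δ ≤ 1 - p (k + 1) := by
    intro k
    induction k with
    | zero => exact min_le_left _ _
    | succ k ih =>
      set n := k + 1 with hn
      set u := 1 - p n with hudef
      have hu0 : 0 < u := by have := hplt n; simp [hudef]; linarith
      have hDk := hDpos n
      have hDeq : m - (m - 1) * p n = 1 + (m - 1) * u := by rw [hudef]; ring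
      have hr2 : r (n + 1) ≤ r 1 := hrle1 n
      have hr2' : r (n + 1) < 1 := hrlt (n + 1)
      -- 1 - p (n+1) = (1 - r (n+1)) * (m * u) / D
      have hid : 1 - p (n + 1) = (1 - r (n + 1)) * (m * u) / (m - (m - 1) * p n) := by
        rw [hpform n]
        rw [hudef]
        have hne : m - (m - 1) * p n ≠ 0 := hDk.ne'
        rw [eq_div_iff hne]
        have key : p n / (m - (m - 1) * p n) * (m - (m - 1) * p n) = p n := div_mul_cancel₀ _ hne
        linear_combination (-(1 - r (n + 1))) * key
      rw [hid]
      rw [le_div_iff₀ hDk]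
      -- goal : δ * (m - (m-1) * p n) ≤ (1 - r (n+1)) * (m * u)
      rw [hDeq]
      nlinarith [mul_nonneg (mul_nonneg hm0.le (sub_nonneg.2 hr2)) hu0.le,
        mul_nonneg (sub_nonneg.2 hδc) hu0.le, ih]
  -- contraction constant
  set κ : ℝ := 1 / (1 + (m - 1) * δ) with hκdef
  have hden : 1 < 1 + (m - 1) * δ := by nlinarith
  have hκ0 : 0 < κ := by positivity
  have hκ1 : κ < 1 := by
    rw [hκdef, div_lt_one (by linarith)]; exact hden
  -- D_n ≥ 1/κ for n ≥ 1
  have hDge : ∀ k, 1 + (m - 1) * δ ≤ m - (m - 1) * p (k + 1) := by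
    intro k
    have := hkey k
    nlinarith
  -- geometric bound on r
  have hrstep : ∀ k, r (k + 2) ≤ κ * r (k + 1) := by
    intro k
    have h1 := hrec_r (k + 1)
    rw [h1, div_le_iff₀ (hDpos (k + 1))]
    have := hDge k
    have hr3 := hrpos (k + 1)
    calc r (k + 1) = κ * r (k + 1) * (1 + (m - 1) * δ) := by
          rw [hκdef]; field_simp
      _ ≤ κ * r (k + 1) * (m - (m - 1) * p (k + 1)) := by
          apply mul_le_mul_of_nonneg_left this (by positivity)
  have hrgeo : ∀ k, r (k + 1) ≤ r 1 * κ ^ k := by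
    intro k
    induction k with
    | zero => simp
    | succ k ih =>
      calc r (k + 1 + 1) ≤ κ * r (k + 1) := hrstep k
        _ ≤ κ * (r 1 * κ ^ k) := mul_le_mul_of_nonneg_left ih hκ0.le
        _ = r 1 * κ ^ (k + 1) := by ring
  -- one-step bound on p
  have hpstep : ∀ k, p (k + 2) ≤ r (k + 2) + κ * p (k + 1) := by
    intro k
    rw [hpform (k + 1)]
    have hp1 := hppos (k + 1)
    have hDk := hDpos (k + 1)
    have h1 : p (k + 1) / (m - (m - 1) * p (k + 1)) ≤ κ * p (k + 1) := by
      rw [div_le_iff₀ hDk]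
      calc p (k + 1) = κ * p (k + 1) * (1 + (m - 1) * δ) := by
            rw [hκdef]; field_simp
        _ ≤ κ * p (k + 1) * (m - (m - 1) * p (k + 1)) :=
            mul_le_mul_of_nonneg_left (hDge k) (by positivity)
    have h2 : (1 - r (k + 2)) * (p (k + 1) / (m - (m - 1) * p (k + 1)))
        ≤ p (k + 1) / (m - (m - 1) * p (k + 1)) := by
      have h3 : 0 ≤ p (k + 1) / (m - (m - 1) * p (k + 1)) := by positivity
      nlinarith [hrpos (k + 2)]
    linarith
  -- geometric-type bound on p
  have hpgeo : ∀ k, p (k + 1) ≤ (p 1 + k * r 1) * κ ^ k := by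
    intro k
    induction k with
    | zero => simp
    | succ k ih =>
      have h1 := hpstep k
      have h2 := hrgeo (k + 1)
      have hr10 := (hrpos 1).le
      push_cast
      calc p (k + 1 + 1) ≤ r (k + 2) + κ * p (k + 1) := h1
        _ ≤ r 1 * κ ^ (k + 1) + κ * ((p 1 + k * r 1) * κ ^ k) := by
            have := mul_le_mul_of_nonneg_left ih hκ0.le
            linarith
        _ = (p 1 + ((k : ℝ) + 1) * r 1) * κ ^ (k + 1) := by ring
  -- limits
  have hrlim : Tendsto (fun k : ℕ => r 1 * κ ^ k) atTop (𝓝 0) := by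
    have := (tendsto_pow_atTop_nhds_zero_of_lt_one hκ0.le hκ1).const_mul (r 1)
    simpa using this
  have hplim : Tendsto (fun k : ℕ => (p 1 + k * r 1) * κ ^ k) atTop (𝓝 0) := by
    have h1 := (tendsto_pow_atTop_nhds_zero_of_lt_one hκ0.le hκ1).const_mul (p 1)
    have h2 := (tendsto_self_mul_const_pow_of_lt_one hκ0.le hκ1).const_mul (r 1)
    have h3 := h1.add h2
    simp only [mul_zero, add_zero] at h3
    convert h3 using 2 with k
    ring
  have hrT : Tendsto (fun k : ℕ => r (k + 1)) atTop (𝓝 0) :=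
    tendsto_of_tendsto_of_tendsto_of_le_of_le tendsto_const_nhds hrlim
      (fun k => (hrpos (k + 1)).le) hrgeo
  have hpT : Tendsto (fun k : ℕ => p (k + 1)) atTop (𝓝 0) :=
    tendsto_of_tendsto_of_tendsto_of_le_of_le tendsto_const_nhds hplim
      (fun k => (hppos (k + 1)).le) hpgeo
  exact ⟨(tendsto_add_atTop_iff_nat 1).mp hrT, (tendsto_add_atTop_iff_nat 1).mp hpT⟩
end

section
/- For every n ≥ 0, 1/r_{n+1} - 1/r_n = m^n (1/r_1 - 1/r_0) ∏_{i=1}^{n} (1 - r_i). -/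
open Filter Finset Topology

/-- For the Derrida–Retaux parameter recursion, for every `n ≥ 0`:
`1/r_{n+1} - 1/r_n = m^n (1/r_1 - 1/r_0) ∏_{i=1}^{n} (1 - r_i)`. -/
theorem stmt7 (m : ℝ) (hm : 1 < m) (r p : ℕ → ℝ)
    (hmem : ∀ n, r n ∈ Set.Ioo (0 : ℝ) 1 ∧ p n ∈ Set.Ioo (0 : ℝ) 1)
    (hrec_r : ∀ n, r (n + 1) = r n / (m - (m - 1) * p n))
    (hrec_p : ∀ n, p (n + 1) = 1 - (1 - r (n + 1)) * (1 - r (n + 1) * p n / r n)) :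
    ∀ n : ℕ,
      1 / r (n + 1) - 1 / r n =
        m ^ n * (1 / r 1 - 1 / r 0) * ∏ i ∈ Finset.range n, (1 - r (i + 1)) := by
  have hr0 : ∀ n, 0 < r n := fun n => (hmem n).1.1
  have hrne : ∀ n, r n ≠ 0 := fun n => (hr0 n).ne'
  have hd : ∀ n, 0 < m - (m - 1) * p n := by
    intro n
    nlinarith [(hmem n).2.1, (hmem n).2.2, hm]
  -- key: 1/r(n+1) - 1/r n = (m-1)(1 - p n)/r n
  have hstep : ∀ n, 1 / r (n + 1) - 1 / r n = (m - 1) * (1 - p n) / r n := by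
    intro n
    rw [hrec_r n]
    field_simp
    ring
  -- ratio: r(n+1)/r n relation and recursion of a_n
  have hmul : ∀ n, (m - 1) * (1 - p (n + 1)) / r (n + 1)
      = m * (1 - r (n + 1)) * ((m - 1) * (1 - p n) / r n) := by
    intro n
    have h1 : 1 - p (n + 1) = (1 - r (n + 1)) * (1 - r (n + 1) * p n / r n) := by
      rw [hrec_p n]; ring
    have h2 : 1 - r (n + 1) * p n / r n = m * (1 - p n) * r (n + 1) / r n := by
      rw [hrec_r n]
      field_simp [hrne n, (hd n).ne']
      ring
    rw [h1, h2]
    field_simp [hrne n, hrne (n + 1)]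
  intro n
  induction n with
  | zero => simp
  | succ k ih =>
      rw [hstep (k + 1), hmul k, ← hstep k, ih, Finset.prod_range_succ]
      ring
end

section
/- In the supercritical case (r_n → 0 and p_n → 0), the ratio r_{n+1}/r_n converges to 1/m as n → ∞. -/
open Filter Topology

theorem stmt8_general (m : ℝ) (hm : 1 < m) (r p : ℕ → ℝ)
    (hmem : ∀ n, r n ∈ Set.Ioo (0 : ℝ) 1 ∧ p n ∈ Set.Ioo (0 : ℝ) 1)
    (hrec_r : ∀ n, r (n + 1) = r n / (m - (m - 1) * p n))
    (hplim : Tendsto p atTop (𝓝 0)) :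
    Tendsto (fun n => r (n + 1) / r n) atTop (𝓝 (1 / m)) := by
  have hden : Tendsto (fun n => m - (m - 1) * p n) atTop (𝓝 m) := by
    simpa using tendsto_const_nhds.sub (hplim.const_mul (m - 1))
  have hratio : ∀ n, (m - (m - 1) * p n)⁻¹ = r (n + 1) / r n := fun n => by
    rw [hrec_r n, div_div_cancel_left' (hmem n).1.1.ne']
  simpa only [one_div, hratio] using hden.inv₀ (by positivity)

/-- For the Derrida–Retaux parameter recursion, in the
supercritical case (`r_n → 0` and `p_n → 0`), the ratio `r_{n+1}/r_n`
converges to `1/m` as `n → ∞`. -/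
theorem stmt8 (m : ℝ) (hm : 1 < m) (r p : ℕ → ℝ)
    (hmem : ∀ n, r n ∈ Set.Ioo (0 : ℝ) 1 ∧ p n ∈ Set.Ioo (0 : ℝ) 1)
    (hrec_r : ∀ n, r (n + 1) = r n / (m - (m - 1) * p n))
    (hrec_p : ∀ n, p (n + 1) = 1 - (1 - r (n + 1)) * (1 - r (n + 1) * p n / r n))
    (hrlim : Tendsto r atTop (𝓝 0)) (hplim : Tendsto p atTop (𝓝 0)) :
    Tendsto (fun n => r (n + 1) / r n) atTop (𝓝 (1 / m)) :=
  stmt8_general m hm r p hmem hrec_r hplim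
end

section
/- In the supercritical case (r_n → 0 and p_n → 0): the infinite product ∏_{i=1}^{∞} (1 - r_i) converges to a strictly positive limit; the quantity F_∞ := (1 - p_0)/r_0 · ∏_{i=1}^{∞} (1 - r_i) lies in (0, ∞) and equals (1/r_0) ∏_{i=0}^{∞} [1 - (m-1) p_i / m]; moreover m^{-n} (1 - p_n)/r_n → F_∞ as n → ∞, and the series Q := Σ_{i=0}^{∞} p_i converges to a finite value. -/
open Filter Finset Topology

/-- In the supercritical case (`r_n → 0` and `p_n → 0`):
the infinite product `∏_{i=1}^∞ (1 - r_i)` converges to a strictly positive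
limit `L`; the free energy `F_∞ = (1 - p_0)/r_0 · L` lies in `(0, ∞)` and equals
`(1/r_0) ∏_{i=0}^∞ [1 - (m-1) p_i / m]`; moreover
`m^{-n} (1 - p_n)/r_n → F_∞`, and `Q = Σ_{i=0}^∞ p_i` converges. -/
theorem stmt9 (m : ℝ) (hm : 1 < m) (r p : ℕ → ℝ)
    (hmem : ∀ n, r n ∈ Set.Ioo (0 : ℝ) 1 ∧ p n ∈ Set.Ioo (0 : ℝ) 1)
    (hrec_r : ∀ n, r (n + 1) = r n / (m - (m - 1) * p n))
    (hrec_p : ∀ n, p (n + 1) = 1 - (1 - r (n + 1)) * (1 - r (n + 1) * p n / r n))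
    (hrlim : Tendsto r atTop (𝓝 0)) (hplim : Tendsto p atTop (𝓝 0)) :
    ∃ L F : ℝ, 0 < L ∧
      Tendsto (fun n => ∏ i ∈ Finset.range n, (1 - r (i + 1))) atTop (𝓝 L) ∧
      F = (1 - p 0) / r 0 * L ∧ 0 < F ∧
      Tendsto (fun n => (r 0)⁻¹ * ∏ i ∈ Finset.range n, (1 - (m - 1) * p i / m))
        atTop (𝓝 F) ∧
      Tendsto (fun n : ℕ => (m ^ n)⁻¹ * ((1 - p n) / r n)) atTop (𝓝 F) ∧
      Summable p := by
  have hr : ∀ n, 0 < r n := fun n => (hmem n).1.1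
  have hr1 : ∀ n, r n < 1 := fun n => (hmem n).1.2
  have hp : ∀ n, 0 < p n := fun n => (hmem n).2.1
  have hp1 : ∀ n, p n < 1 := fun n => (hmem n).2.2
  have hm0 : (0:ℝ) < m := lt_trans one_pos hm
  have hD : ∀ n, 1 < m - (m - 1) * p n := by
    intro n; nlinarith [hp1 n, hp n]
  have hDpos : ∀ n, 0 < m - (m - 1) * p n := fun n => lt_trans one_pos (hD n)
  -- the fundamental step equation: r (n+1) * (m - (m-1) p n) = r n
  have hs : ∀ n, r (n + 1) * (m - (m - 1) * p n) = r n := by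
    intro n
    rw [hrec_r n, div_mul_cancel₀ _ (ne_of_gt (hDpos n))]
  set q : ℝ := 2 / (m + 1) with hqdef
  have hq0 : 0 < q := by positivity
  have hq1 : q < 1 := by
    rw [hqdef, div_lt_one (by linarith)]; linarith
  -- eventually p n < 1/2, giving geometric decay of r
  obtain ⟨N, hN⟩ := (hplim.eventually_lt_const (by norm_num : (0:ℝ) < 1/2)).exists_forall_of_atTop
  have hdecay : ∀ n, N ≤ n → r (n + 1) ≤ q * r n := by
    intro n hn
    have h1 : (m + 1) / 2 ≤ m - (m - 1) * p n := by
      have := hN n hn; nlinarith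
    have h2 : r (n + 1) ≤ r n / ((m + 1) / 2) := by
      rw [hrec_r n]
      exact div_le_div_of_nonneg_left (hr n).le (by linarith) h1
    calc r (n + 1) ≤ r n / ((m + 1) / 2) := h2
      _ = q * r n := by rw [hqdef]; field_simp
  have hrgeo : ∀ k, r (N + k) ≤ r N * q ^ k := by
    intro k
    induction k with
    | zero => simp
    | succ k ih =>
      have := hdecay (N + k) (Nat.le_add_right N k)
      calc r (N + (k + 1)) = r (N + k + 1) := rfl
        _ ≤ q * r (N + k) := this
        _ ≤ q * (r N * q ^ k) := by nlinarith [hr (N + k)]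
        _ = r N * q ^ (k + 1) := by ring
  have hsumr : Summable r := by
    rw [← summable_nat_add_iff N]
    refine Summable.of_nonneg_of_le (fun k => (hr _).le) (fun k => ?_)
      ((summable_geometric_of_lt_one hq0.le hq1).mul_left (r N))
    have := hrgeo k; rwa [add_comm] at this
  -- summability of logs
  have hlogsum : Summable (fun i => Real.log (1 - r (i + 1))) := by
    refine Summable.of_norm_bounded_eventually_nat (g := fun i => 2 * r (i + 1))
      (((summable_nat_add_iff 1).2 hsumr).mul_left 2) ?_
    have hev : ∀ᶠ n in atTop, r n < 1/2 :=
      hrlim.eventually_lt_const (by norm_num)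
    obtain ⟨M, hM⟩ := hev.exists_forall_of_atTop
    filter_upwards [eventually_ge_atTop M] with i hi
    have hri : r (i + 1) < 1/2 := hM _ (by omega)
    have h0 : 0 < 1 - r (i + 1) := by linarith [hr1 (i + 1)]
    have hlog_neg : Real.log (1 - r (i + 1)) ≤ 0 :=
      Real.log_nonpos (by linarith) (by linarith [hr (i + 1)])
    rw [Real.norm_eq_abs, abs_of_nonpos hlog_neg]
    have h2 : Real.log ((1 - r (i + 1))⁻¹) ≤ (1 - r (i + 1))⁻¹ - 1 :=
      Real.log_le_sub_one_of_pos (by positivity)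
    rw [Real.log_inv] at h2
    have h3 : (1 - r (i + 1))⁻¹ - 1 = r (i + 1) / (1 - r (i + 1)) := by
      field_simp
      ring
    have h4 : r (i + 1) / (1 - r (i + 1)) ≤ 2 * r (i + 1) := by
      rw [div_le_iff₀ h0]; nlinarith [hr (i + 1)]
    linarith [h2, h3 ▸ h2]
  obtain ⟨S, hS⟩ := hlogsum
  set L : ℝ := Real.exp S with hLdef
  have hL0 : 0 < L := Real.exp_pos S
  have hprod_eq : ∀ n, ∏ i ∈ Finset.range n, (1 - r (i + 1)) =
      Real.exp (∑ i ∈ Finset.range n, Real.log (1 - r (i + 1))) := by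
    intro n
    rw [Real.exp_sum]
    refine Finset.prod_congr rfl fun i _ => ?_
    rw [Real.exp_log (by linarith [hr1 (i + 1)])]
  have hLtendsto : Tendsto (fun n => ∏ i ∈ Finset.range n, (1 - r (i + 1)))
      atTop (𝓝 L) := by
    simp only [hprod_eq]
    exact (Real.continuous_exp.tendsto S).comp hS.tendsto_sum_nat
  set F : ℝ := (1 - p 0) / r 0 * L with hFdef
  have hF0 : 0 < F := by
    apply mul_pos _ hL0
    exact div_pos (by linarith [hp1 0]) (hr 0)
  -- key identity A
  have hA : ∀ n, (m ^ n)⁻¹ * ((1 - p n) / r n) =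
      (1 - p 0) / r 0 * ∏ i ∈ Finset.range n, (1 - r (i + 1)) := by
    intro n
    induction n with
    | zero => simp
    | succ n ih =>
      rw [Finset.prod_range_succ, ← mul_assoc, ← ih, hrec_p n, pow_succ]
      have hrn1 := (hr (n + 1)).ne'
      have hmn : (m : ℝ) ^ n ≠ 0 := pow_ne_zero n hm0.ne'
      have hDn : m - (m - 1) * p n ≠ 0 := (hDpos n).ne'
      rw [show r n = r (n + 1) * (m - (m - 1) * p n) from (hs n).symm]
      field_simp
      rw [one_sub_div (show m - p n * (m - 1) ≠ 0 by linarith [hDpos n])]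
      ring
  have hAten : Tendsto (fun n : ℕ => (m ^ n)⁻¹ * ((1 - p n) / r n)) atTop (𝓝 F) := by
    simp only [hA, hFdef]
    exact hLtendsto.const_mul _
  -- key identity B
  have hB : ∀ n, (r 0)⁻¹ * ∏ i ∈ Finset.range n, (1 - (m - 1) * p i / m) =
      (m ^ n * r n)⁻¹ := by
    intro n
    induction n with
    | zero => simp
    | succ n ih =>
      rw [Finset.prod_range_succ, ← mul_assoc, ih, pow_succ]
      have hrn1 := (hr (n + 1)).ne'
      have hmn : (m : ℝ) ^ n ≠ 0 := pow_ne_zero n hm0.ne'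
      have hDn : m - (m - 1) * p n ≠ 0 := (hDpos n).ne'
      rw [show r n = r (n + 1) * (m - (m - 1) * p n) from (hs n).symm]
      field_simp
  have hBten : Tendsto (fun n => (r 0)⁻¹ * ∏ i ∈ Finset.range n, (1 - (m - 1) * p i / m))
      atTop (𝓝 F) := by
    have heq : ∀ n : ℕ, (r 0)⁻¹ * ∏ i ∈ Finset.range n, (1 - (m - 1) * p i / m) =
        ((m ^ n)⁻¹ * ((1 - p n) / r n)) / (1 - p n) := by
      intro n
      rw [hB n]
      have h1 : (1 : ℝ) - p n ≠ 0 := by linarith [hp1 n]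
      have hA0 : m ^ n * r n ≠ 0 := mul_ne_zero (pow_ne_zero n hm0.ne') (hr n).ne'
      field_simp
    simp only [heq]
    have h1 : Tendsto (fun n : ℕ => 1 - p n) atTop (𝓝 1) := by
      have h2 := (tendsto_const_nhds : Tendsto (fun _ : ℕ => (1:ℝ)) atTop (𝓝 1)).sub hplim
      simpa using h2
    have := hAten.div h1 (by norm_num)
    simpa only [div_one, Pi.div_def] using this
  -- summability of p
  have hq'0 : 0 < (1 + q) / 2 := by positivity
  have hq'1 : (1 + q) / 2 < 1 := by linarith
  set q' : ℝ := (1 + q) / 2 with hq'def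
  have hqq' : q ≤ q' := by rw [hq'def]; linarith
  have hqq'2 : q ≤ q' ^ 2 := by nlinarith
  set C : ℝ := max (p N) (r N / (1 - q')) with hCdef
  have hC0 : 0 < C := lt_of_lt_of_le (hp N) (le_max_left _ _)
  have hCr : r N ≤ C * (1 - q') := by
    have h1 : r N / (1 - q') ≤ C := le_max_right _ _
    have h2 : 0 < 1 - q' := by linarith
    calc r N = r N / (1 - q') * (1 - q') := by field_simp
      _ ≤ C * (1 - q') := by nlinarith
  have hstep : ∀ n, N ≤ n → p (n + 1) ≤ r (n + 1) + q * p n := by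
    intro n hn
    have h1 : p (n + 1) * r n ≤ (r (n + 1) + q * p n) * r n := by
      rw [hrec_p n]
      have hrn := (hr n).ne'
      have hd := hdecay n hn
      have hexp : (1 - (1 - r (n + 1)) * (1 - r (n + 1) * p n / r n)) * r n =
          r (n + 1) * r n + r (n + 1) * (1 - r (n + 1)) * p n := by
        field_simp; ring
      rw [hexp]
      nlinarith [mul_le_mul_of_nonneg_right hd (hp n).le,
        mul_nonneg (mul_nonneg (hr (n + 1)).le (hr (n + 1)).le) (hp n).le]
    exact le_of_mul_le_mul_right h1 (hr n)
  have hpgeo : ∀ k, p (N + k) ≤ C * q' ^ k := by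
    intro k
    induction k with
    | zero =>
      simp only [Nat.add_zero, pow_zero, mul_one]
      exact le_max_left _ _
    | succ k ih =>
      have h1 : p (N + k + 1) ≤ r (N + k + 1) + q * p (N + k) :=
        hstep (N + k) (Nat.le_add_right N k)
      have h2 : r (N + k + 1) ≤ r N * q ^ (k + 1) := hrgeo (k + 1)
      have h3 : q ^ (k + 1) ≤ q' ^ (k + 1) := pow_le_pow_left₀ hq0.le hqq' _
      have h4 : q * p (N + k) ≤ q' ^ 2 * (C * q' ^ k) :=
        mul_le_mul hqq'2 ih (hp _).le (by positivity)
      have h5 : r N * q ^ (k + 1) ≤ C * (1 - q') * q' ^ (k + 1) :=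
        mul_le_mul hCr h3 (by positivity) (le_trans (hr N).le hCr)
      have h6 : q' ^ 2 * (C * q' ^ k) = q' * (C * q' ^ (k + 1)) := by ring
      have h7 : C * (1 - q') * q' ^ (k + 1) + q' * (C * q' ^ (k + 1)) =
          C * q' ^ (k + 1) := by ring
      show p (N + k + 1) ≤ C * q' ^ (k + 1)
      calc p (N + k + 1) ≤ r (N + k + 1) + q * p (N + k) := h1
        _ ≤ r N * q ^ (k + 1) + q' ^ 2 * (C * q' ^ k) := by linarith
        _ = r N * q ^ (k + 1) + q' * (C * q' ^ (k + 1)) := by rw [h6]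
        _ ≤ C * q' ^ (k + 1) := by linarith
  have hsump : Summable p := by
    rw [← summable_nat_add_iff N]
    refine Summable.of_nonneg_of_le (fun k => (hp _).le) (fun k => ?_)
      ((summable_geometric_of_lt_one hq'0.le hq'1).mul_left C)
    have := hpgeo k; rwa [add_comm] at this
  exact ⟨L, F, hL0, hLtendsto, rfl, hF0, hBten, hAten, hsump⟩
end

section
/- In the subcritical case (r_n → r_* with 1 - 1/m < r_* < 1), the infinite product ∏_{i=1}^{∞} (1 - r_i)/(1 - r_*) converges to a finite strictly positive limit, and hence K := (r_0 - r_1)/(r_0 r_1) · ∏_{i=1}^{∞} (1 - r_i)/(1 - r_*) lies in (0, ∞). -/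
open Filter Finset Topology

set_option maxHeartbeats 1000000 in
/-- In the subcritical case (`r_n → r_*` with
`1 - 1/m < r_* < 1`), the infinite product `∏_{i=1}^∞ (1 - r_i)/(1 - r_*)`
converges to a finite strictly positive limit `L`, and hence
`K = (r_0 - r_1)/(r_0 r_1) · L` lies in `(0, ∞)`. -/
theorem stmt12 (m : ℝ) (hm : 1 < m) (r p : ℕ → ℝ)
    (hmem : ∀ n, r n ∈ Set.Ioo (0 : ℝ) 1 ∧ p n ∈ Set.Ioo (0 : ℝ) 1)
    (hdec : ∀ n, r (n + 1) < r n)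
    (hrec_r : ∀ n, r (n + 1) = r n / (m - (m - 1) * p n))
    (hrec_p : ∀ n, p (n + 1) = 1 - (1 - r (n + 1)) * (1 - r (n + 1) * p n / r n))
    (rs : ℝ) (hrlim : Tendsto r atTop (𝓝 rs))
    (hrs1 : 1 - 1 / m < rs) (hrs2 : rs < 1) :
    ∃ L : ℝ, 0 < L ∧
      Tendsto (fun n => ∏ i ∈ Finset.range n, ((1 - r (i + 1)) / (1 - rs)))
        atTop (𝓝 L) ∧
      0 < (r 0 - r 1) / (r 0 * r 1) * L := by
  have hr0 : ∀ n, 0 < r n := fun n => (hmem n).1.1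
  have hr1 : ∀ n, r n < 1 := fun n => (hmem n).1.2
  have hp0 : ∀ n, 0 < p n := fun n => (hmem n).2.1
  have hp1 : ∀ n, p n < 1 := fun n => (hmem n).2.2
  have hanti : StrictAnti r := strictAnti_nat_of_succ_lt hdec
  -- limit is below every term
  have hge : ∀ n, rs ≤ r n := by
    intro n
    refine le_of_tendsto hrlim ?_
    filter_upwards [eventually_ge_atTop n] with k hk
    exact hanti.antitone hk
  have hden : ∀ n, 0 < m - (m - 1) * p n := by
    intro n
    nlinarith [hp0 n, hp1 n]
  -- key identity for the decrements
  have hkey : ∀ n, r n - r (n + 1) = (m - 1) * r (n + 1) * (1 - p n) := by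
    intro n
    have h := hrec_r n
    rw [eq_div_iff (hden n).ne'] at h
    linear_combination -h
  -- recursion for q_n = 1 - p_n
  have hq : ∀ n, 1 - p (n + 1) = m * (1 - r (n + 1)) * (r (n + 1) / r n) * (1 - p n) := by
    intro n
    have h := hrec_p n
    have hk := hkey n
    have hrn := (hr0 n).ne'
    have h2 : 1 - r (n + 1) * p n / r n = m * (r (n + 1) / r n) * (1 - p n) := by
      field_simp
      linear_combination hk
    rw [h, h2]
    ring
  -- geometric ratio setup
  have ha0 : 0 ≤ m * (1 - rs) := by nlinarith
  have ha1 : m * (1 - rs) < 1 := by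
    have hrs0 : 1 - rs < 1 / m := by linarith
    calc m * (1 - rs) < m * (1 / m) := by
          apply mul_lt_mul_of_pos_left hrs0 (by linarith)
      _ = 1 := by field_simp
  set c : ℝ := (m * (1 - rs) + 1) / 2 with hc_def
  have hac : m * (1 - rs) < c := by rw [hc_def]; linarith
  have hc0 : 0 < c := by rw [hc_def]; linarith
  have hc1 : c < 1 := by rw [hc_def]; linarith
  -- eventually the factor is ≤ c
  have htend : Tendsto (fun n => m * (1 - r (n + 1))) atTop (𝓝 (m * (1 - rs))) := by
    have h1 : Tendsto (fun n => r (n + 1)) atTop (𝓝 rs) :=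
      hrlim.comp (tendsto_add_atTop_nat 1)
    exact (tendsto_const_nhds.sub h1).const_mul m
  obtain ⟨N, hN⟩ := eventually_atTop.mp (htend.eventually_lt_const hac)
  -- q is geometrically small from N on
  have hqpos : ∀ n, 0 < 1 - p n := fun n => by linarith [hp1 n]
  have hqgeo : ∀ k, 1 - p (N + k) ≤ (1 - p N) * c ^ k := by
    intro k
    induction k with
    | zero => simp
    | succ k ih =>
      have h := hq (N + k)
      have hratio : r (N + k + 1) / r (N + k) ≤ 1 :=
        div_le_one_of_le₀ (hdec (N + k)).le (hr0 (N + k)).le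
      have hfac : m * (1 - r (N + k + 1)) ≤ c := (hN (N + k) (by omega)).le
      have hfac0 : 0 ≤ m * (1 - r (N + k + 1)) := by nlinarith [hr1 (N + k + 1)]
      have hratio0 : 0 ≤ r (N + k + 1) / r (N + k) :=
        div_nonneg (hr0 _).le (hr0 _).le
      have hq0 : 0 < 1 - p (N + k) := hqpos _
      have h3 : m * (1 - r (N + k + 1)) * (r (N + k + 1) / r (N + k)) ≤ c := by
        calc m * (1 - r (N + k + 1)) * (r (N + k + 1) / r (N + k)) ≤ c * 1 :=
              mul_le_mul hfac hratio hratio0 hc0.le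
          _ = c := mul_one c
      have : 1 - p (N + k + 1) ≤ c * (1 - p (N + k)) := by
        rw [h]
        exact mul_le_mul_of_nonneg_right h3 hq0.le
      calc 1 - p (N + (k + 1)) = 1 - p (N + k + 1) := by ring_nf
        _ ≤ c * (1 - p (N + k)) := this
        _ ≤ c * ((1 - p N) * c ^ k) := by
            apply mul_le_mul_of_nonneg_left ih hc0.le
        _ = (1 - p N) * c ^ (k + 1) := by ring
  -- decrement bound
  have hdbound : ∀ k, r (N + k) - r (N + k + 1) ≤ (m - 1) * ((1 - p N) * c ^ k) := by
    intro k
    rw [hkey (N + k)]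
    have hle := hqgeo k
    have h1 : (m - 1) * r (N + k + 1) * (1 - p (N + k)) ≤ (m - 1) * (1 - p (N + k)) := by
      nlinarith [mul_pos (mul_pos (by linarith : (0:ℝ) < m - 1) (hqpos (N + k)))
        (by linarith [hr1 (N + k + 1)] : (0:ℝ) < 1 - r (N + k + 1))]
    have h2 : (m - 1) * (1 - p (N + k)) ≤ (m - 1) * ((1 - p N) * c ^ k) :=
      mul_le_mul_of_nonneg_left hle (by linarith)
    linarith
  -- tail bound : r (N + k) - rs ≤ B * c ^ k
  set B : ℝ := (m - 1) * (1 - p N) * (1 / (1 - c)) with hB_def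
  have htail : ∀ k, r (N + k) - rs ≤ B * c ^ k := by
    intro k
    have hM : ∀ M : ℕ, r (N + k) - r (N + k + M) ≤ B * c ^ k := by
      intro M
      have htel : ∑ j ∈ range M, (r (N + k + j) - r (N + k + j + 1))
          = r (N + k) - r (N + k + M) := by
        have := Finset.sum_range_sub' (fun j => r (N + k + j)) M
        simpa [add_assoc] using this
      rw [← htel]
      have hstep : ∀ j ∈ range M, r (N + k + j) - r (N + k + j + 1)
          ≤ (m - 1) * (1 - p N) * c ^ k * c ^ j := by
        intro j _
        have := hdbound (k + j)
        calc r (N + k + j) - r (N + k + j + 1)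
            = r (N + (k + j)) - r (N + (k + j) + 1) := by ring_nf
          _ ≤ (m - 1) * ((1 - p N) * c ^ (k + j)) := hdbound (k + j)
          _ = (m - 1) * (1 - p N) * c ^ k * c ^ j := by rw [pow_add]; ring
      calc ∑ j ∈ range M, (r (N + k + j) - r (N + k + j + 1))
          ≤ ∑ j ∈ range M, (m - 1) * (1 - p N) * c ^ k * c ^ j :=
            Finset.sum_le_sum hstep
        _ = (m - 1) * (1 - p N) * c ^ k * ∑ j ∈ range M, c ^ j := by
            rw [Finset.mul_sum]
        _ ≤ (m - 1) * (1 - p N) * c ^ k * (1 / (1 - c)) := by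
            apply mul_le_mul_of_nonneg_left _
              (le_of_lt (mul_pos (mul_pos (by linarith : (0:ℝ) < m - 1) (hqpos N))
                (pow_pos hc0 k)))
            have hsum : ∑ j ∈ range M, c ^ j ≤ ∑' j : ℕ, c ^ j :=
              Summable.sum_le_tsum (range M) (fun j _ => (pow_pos hc0 j).le)
                (summable_geometric_of_lt_one hc0.le hc1)
            rwa [tsum_geometric_of_lt_one hc0.le hc1, ← one_div] at hsum
        _ = B * c ^ k := by rw [hB_def]; ring
    have hlim' : Tendsto (fun M : ℕ => r (M + (N + k))) atTop (𝓝 rs) :=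
      hrlim.comp (tendsto_add_atTop_nat (N + k))
    have hlim2 : Tendsto (fun M : ℕ => r (N + k + M)) atTop (𝓝 rs) :=
      hlim'.congr (fun M => by rw [Nat.add_comm M (N + k)])
    have hlim : Tendsto (fun M : ℕ => r (N + k) - r (N + k + M)) atTop
        (𝓝 (r (N + k) - rs)) := Tendsto.const_sub (r (N + k)) hlim2
    exact le_of_tendsto hlim (Eventually.of_forall hM)
  -- summability of (r n - rs)
  have hsum_shift : Summable (fun k => r (k + N) - rs) := by
    refine Summable.of_nonneg_of_le (fun k => sub_nonneg.2 (hge _)) (fun k => ?_)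
      ((summable_geometric_of_lt_one hc0.le hc1).mul_left B)
    have hk := htail k
    rw [add_comm N k] at hk
    exact hk
  have hsum : Summable (fun n => r n - rs) := (summable_nat_add_iff N).mp hsum_shift
  have hsum1 : Summable (fun n => r (n + 1) - rs) := (summable_nat_add_iff 1).mpr hsum
  -- log terms
  set g : ℕ → ℝ := fun i => Real.log ((1 - r (i + 1)) / (1 - rs)) with hg_def
  have hapos : ∀ i, 0 < (1 - r (i + 1)) / (1 - rs) := fun i =>
    div_pos (by linarith [hr1 (i + 1)]) (by linarith)
  have hr1top : ∀ i, r (i + 1) ≤ r 1 := fun i => hanti.antitone (by omega)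
  have h1r1 : 0 < 1 - r 1 := by linarith [hr1 1]
  have habs : ∀ i, |g i| ≤ (r (i + 1) - rs) * (1 - r 1)⁻¹ := by
    intro i
    have ha1' : (1 - r (i + 1)) / (1 - rs) ≤ 1 := by
      apply div_le_one_of_le₀ (by linarith [hge (i + 1)]) (by linarith)
    have hgle : g i ≤ 0 := Real.log_nonpos (hapos i).le ha1'
    rw [abs_of_nonpos hgle]
    have hinv : -g i = Real.log ((1 - rs) / (1 - r (i + 1))) := by
      rw [hg_def]
      rw [← Real.log_inv]
      congr 1
      rw [inv_div]
    rw [hinv]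
    have hpos2 : (0:ℝ) < (1 - rs) / (1 - r (i + 1)) :=
      div_pos (by linarith) (by linarith [hr1 (i + 1)])
    calc Real.log ((1 - rs) / (1 - r (i + 1)))
        ≤ (1 - rs) / (1 - r (i + 1)) - 1 := Real.log_le_sub_one_of_pos hpos2
      _ = (r (i + 1) - rs) / (1 - r (i + 1)) := by
          rw [div_sub_one (ne_of_gt (by linarith [hr1 (i + 1)] : (0:ℝ) < 1 - r (i + 1)))]
          congr 1
          ring
      _ ≤ (r (i + 1) - rs) * (1 - r 1)⁻¹ := by
          rw [div_eq_mul_inv]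
          apply mul_le_mul_of_nonneg_left _ (by linarith [hge (i + 1)])
          apply inv_anti₀ h1r1 (by linarith [hr1top i])
  have hgsum : Summable g := by
    apply Summable.of_abs
    apply Summable.of_nonneg_of_le (fun i => abs_nonneg _) habs
    exact hsum1.mul_right _
  set S : ℝ := ∑' i, g i with hS_def
  have hpartial : Tendsto (fun n => ∑ i ∈ range n, g i) atTop (𝓝 S) :=
    hgsum.hasSum.tendsto_sum_nat
  refine ⟨Real.exp S, Real.exp_pos S, ?_, ?_⟩
  · have heq : (fun n => ∏ i ∈ Finset.range n, ((1 - r (i + 1)) / (1 - rs)))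
        = fun n => Real.exp (∑ i ∈ range n, g i) := by
      funext n
      rw [Real.exp_sum]
      exact Finset.prod_congr rfl fun i _ => (Real.exp_log (hapos i)).symm
    rw [heq]
    exact (Real.continuous_exp.tendsto S).comp hpartial
  · have h01 : 0 < r 0 - r 1 := sub_pos.2 (hdec 0)
    have : 0 < r 0 * r 1 := mul_pos (hr0 0) (hr0 1)
    positivity
end

section
/- In the subcritical case (r_n → r_* with 1 - 1/m < r_* < 1), as n → ∞: r_n = r_* + K r_*^2 γ_*^n/(1 - γ_*) + (1 + m r_*/(1 - γ_*^2)) · K^2 r_*^3 γ_*^{2n}/(1 - γ_*)^2 + o(γ_*^{2n}); that is, (r_n - r_* - K r_*^2 γ_*^n/(1 - γ_*) - (1 + m r_*/(1 - γ_*^2)) K^2 r_*^3 γ_*^{2n}/(1 - γ_*)^2) / γ_*^{2n} → 0. -/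
open Filter Finset Topology

/-- A sequence dominated in absolute value by a geometric is summable. -/
lemma aux_geom_summable {β : ℝ} (hβ0 : 0 ≤ β) (hβ1 : β < 1) (f : ℕ → ℝ) (C : ℝ)
    (h : ∀ k, |f k| ≤ C * β ^ k) : Summable f :=
  Summable.of_norm_bounded ((summable_geometric_of_lt_one hβ0 hβ1).mul_left C)
    (by simpa [Real.norm_eq_abs] using h)

/-- Telescoping tail: if `g → Lg` and the differences are summable, then the
tail of differences starting at `n` sums to `g n - Lg`. -/
lemma aux_tail_hasSum (g : ℕ → ℝ) (Lg : ℝ) (hg : Tendsto g atTop (𝓝 Lg))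
    (hs : Summable (fun k => g k - g (k + 1))) (n : ℕ) :
    HasSum (fun k => g (n + k) - g (n + k + 1)) (g n - Lg) := by
  have hs' : Summable (fun k => g (n + k) - g (n + k + 1)) :=
    hs.comp_injective (add_right_injective n)
  have h1 : Tendsto (fun N => ∑ k ∈ Finset.range N, (g (n + k) - g (n + k + 1)))
      atTop (𝓝 (∑' k, (g (n + k) - g (n + k + 1)))) := hs'.hasSum.tendsto_sum_nat
  have h2 : Tendsto (fun N => ∑ k ∈ Finset.range N, (g (n + k) - g (n + k + 1)))
      atTop (𝓝 (g n - Lg)) := by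
    have hshift : Tendsto (fun N : ℕ => n + N) atTop atTop :=
      tendsto_atTop_mono (fun N => Nat.le_add_left N n) tendsto_id
    have : Tendsto (fun N => g n - g (n + N)) atTop (𝓝 (g n - Lg)) :=
      tendsto_const_nhds.sub (hg.comp hshift)
    refine this.congr (fun N => ?_)
    exact (Finset.sum_range_sub' (fun k => g (n + k)) N).symm
  have := tendsto_nhds_unique h1 h2
  exact this ▸ hs'.hasSum

set_option maxHeartbeats 2000000 in
/-- In the subcritical case (`r_n → r_*` with
`1 - 1/m < r_* < 1`), with `γ_* = m(1 - r_*)` and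
`K = (r_0 - r_1)/(r_0 r_1) · ∏_{i=1}^∞ (1 - r_i)/(1 - r_*)`, as `n → ∞`:
`r_n = r_* + K r_*² γ_*ⁿ/(1-γ_*) + (1 + m r_*/(1-γ_*²)) K² r_*³ γ_*^{2n}/(1-γ_*)² + o(γ_*^{2n})`. -/
theorem stmt13 (m : ℝ) (hm : 1 < m) (r p : ℕ → ℝ)
    (hmem : ∀ n, r n ∈ Set.Ioo (0 : ℝ) 1 ∧ p n ∈ Set.Ioo (0 : ℝ) 1)
    (hrec_r : ∀ n, r (n + 1) = r n / (m - (m - 1) * p n))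
    (hrec_p : ∀ n, p (n + 1) = 1 - (1 - r (n + 1)) * (1 - r (n + 1) * p n / r n))
    (rs : ℝ) (hrlim : Tendsto r atTop (𝓝 rs))
    (hrs1 : 1 - 1 / m < rs) (hrs2 : rs < 1)
    (γ : ℝ) (hγ : γ = m * (1 - rs))
    (L K : ℝ)
    (hL : Tendsto (fun n => ∏ i ∈ Finset.range n, ((1 - r (i + 1)) / (1 - rs)))
      atTop (𝓝 L))
    (hK : K = (r 0 - r 1) / (r 0 * r 1) * L) (hKpos : 0 < K) :
    Tendsto
      (fun n : ℕ =>
        (r n - rs - K * rs ^ 2 * γ ^ n / (1 - γ) -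
            (1 + m * rs / (1 - γ ^ 2)) * K ^ 2 * rs ^ 3 * γ ^ (2 * n) / (1 - γ) ^ 2) /
          γ ^ (2 * n))
      atTop (𝓝 0) := by
  -- basic positivity facts
  have hm0 : (0:ℝ) < m := by linarith
  have hm1 : (0:ℝ) < m - 1 := by linarith
  have hrp : ∀ n, 0 < r n := fun n => (hmem n).1.1
  have hr1 : ∀ n, r n < 1 := fun n => (hmem n).1.2
  have hpp : ∀ n, 0 < p n := fun n => (hmem n).2.1
  have hp1 : ∀ n, p n < 1 := fun n => (hmem n).2.2
  have hrs0 : 0 < rs := by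
    have : 1 / m < 1 := by rw [div_lt_one hm0]; exact hm
    linarith
  have h1rs : 0 < 1 - rs := by linarith
  have hγ0 : 0 < γ := by rw [hγ]; exact mul_pos hm0 h1rs
  have hγ1 : γ < 1 := by
    have h1 : m * (1 - 1/m) < m * rs := mul_lt_mul_of_pos_left hrs1 hm0
    have h2 : m * (1 - 1/m) = m - 1 := by field_simp
    rw [hγ]; nlinarith
  have hγn : ∀ n : ℕ, (0:ℝ) < γ ^ n := fun n => pow_pos hγ0 n
  have hγ2 : γ ^ 2 < 1 := by nlinarith
  have h1γ : (0:ℝ) < 1 - γ := by linarith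
  have h1γ2 : (0:ℝ) < 1 - γ ^ 2 := by linarith
  -- the auxiliary sequence w
  set w : ℕ → ℝ := fun n => (1 - p n) / r n with hw_def
  have hw : ∀ n, 0 < w n := fun n => div_pos (by linarith [hp1 n]) (hrp n)
  have hden : ∀ n, (1:ℝ) < m - (m - 1) * p n := by
    intro n
    nlinarith [hp1 n, hpp n]
  have hrr : ∀ n, r (n + 1) * (m - (m - 1) * p n) = r n := by
    intro n
    rw [hrec_r n, div_mul_cancel₀ _ (ne_of_gt (lt_trans zero_lt_one (hden n)))]
  have hDne : ∀ n, m - (m - 1) * p n ≠ 0 := fun n => ne_of_gt (lt_trans zero_lt_one (hden n))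
  have key1 : ∀ n, w (n + 1) = m * (1 - r (n + 1)) * w n := by
    intro n
    have hrn := (hrp n).ne'
    have h2 : (1 - r (n + 1) * p n / r n) / r (n + 1) = m * w n := by
      rw [div_eq_iff (hrp (n+1)).ne']
      simp only [hw_def]
      rw [hrec_r n]
      field_simp [hDne n]
      ring
    have h1 : w (n + 1) = (1 - r (n + 1)) * ((1 - r (n + 1) * p n / r n) / r (n + 1)) := by
      simp only [hw_def]
      rw [hrec_p n]
      ring
    rw [h1, h2]
    ring
  have key2 : ∀ n, 1 / r (n + 1) = 1 / r n + (m - 1) * w n := by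
    intro n
    have hrn := (hrp n).ne'
    simp only [hw_def]
    rw [hrec_r n]
    field_simp [hDne n]
    ring
  -- the product P
  set P : ℕ → ℝ := fun n => ∏ i ∈ Finset.range n, ((1 - r (i + 1)) / (1 - rs)) with hP_def
  have hL' : Tendsto P atTop (𝓝 L) := hL
  have hPpos : ∀ n, 0 < P n := by
    intro n
    apply Finset.prod_pos
    intro i _
    exact div_pos (by linarith [hr1 (i + 1)]) h1rs
  have key3 : ∀ n, w n = w 0 * γ ^ n * P n := by
    intro n
    induction n with
    | zero => simp [hP_def]
    | succ k ih =>
      rw [key1 k, ih]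
      simp only [hP_def]
      rw [Finset.prod_range_succ, pow_succ, hγ]
      field_simp
  obtain ⟨M, hM⟩ : ∃ M, ∀ n, P n ≤ M := by
    obtain ⟨M, hM⟩ := hL'.bddAbove_range
    exact ⟨M, fun n => hM (Set.mem_range_self n)⟩
  have hwle : ∀ n, w n ≤ w 0 * M * γ ^ n := by
    intro n
    rw [key3 n]
    calc w 0 * γ ^ n * P n ≤ w 0 * γ ^ n * M :=
          mul_le_mul_of_nonneg_left (hM n) (mul_nonneg (hw 0).le (hγn n).le)
      _ = w 0 * M * γ ^ n := by ring
  have hsumw : Summable w := aux_geom_summable hγ0.le hγ1 w (w 0 * M)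
    (fun k => by rw [abs_of_pos (hw k)]; exact hwle k)
  -- tail sums S
  set S : ℕ → ℝ := fun n => (1 / rs - 1 / r n) / (m - 1) with hS_def
  have hinv : Tendsto (fun n => 1 / r n) atTop (𝓝 (1 / rs)) := by
    simpa [one_div] using hrlim.inv₀ hrs0.ne'
  have hdiff_eq : ∀ k, (-(1 / r k) / (m - 1)) - (-(1 / r (k + 1)) / (m - 1)) = w k := by
    intro k
    have h : w k = (1 / r (k + 1) - 1 / r k) / (m - 1) := by
      rw [key2 k]
      field_simp
      ring
    rw [h]
    ring
  have hdiffsum : Summable (fun k => (-(1 / r k) / (m - 1)) - (-(1 / r (k + 1)) / (m - 1))) :=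
    hsumw.congr (fun k => (hdiff_eq k).symm)
  have hS_hasSum : ∀ n, HasSum (fun k => w (n + k)) (S n) := by
    intro n
    have hgt : Tendsto (fun j => -(1 / r j) / (m - 1)) atTop (𝓝 (-(1 / rs) / (m - 1))) :=
      (hinv.neg).div_const (m - 1)
    have h := aux_tail_hasSum (fun j => -(1 / r j) / (m - 1)) (-(1 / rs) / (m - 1))
      hgt hdiffsum n
    have hfun : (fun k => (-(1 / r (n + k)) / (m - 1)) - (-(1 / r (n + k + 1)) / (m - 1)))
        = fun k => w (n + k) := funext fun k => hdiff_eq (n + k)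
    rw [hfun] at h
    have hval : -(1 / r n) / (m - 1) - -(1 / rs) / (m - 1) = S n := by
      simp only [hS_def]
      ring
    rwa [hval] at h
  have hrid : ∀ n, r n - rs = (m - 1) * rs * r n * S n := by
    intro n
    simp only [hS_def]
    have h0 := (hrp n).ne'
    field_simp
  -- constants
  have hw0K : K = (m - 1) * w 0 * L := by
    rw [hK]
    congr 1
    have h := key2 0
    have h0 := (hrp 0).ne'
    have h1 := (hrp 1).ne'
    rw [div_eq_iff (by exact mul_ne_zero h0 h1)]
    field_simp at h
    linear_combination h
  have hL0 : 0 < L := by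
    have hK' : 0 < (m - 1) * w 0 * L := hw0K ▸ hKpos
    nlinarith [mul_pos hm1 (hw 0)]
  have hMpos : 0 < M := lt_of_lt_of_le (hPpos 0) (hM 0)
  have hshiftP : ∀ k, Tendsto (fun n => P (n + k)) atTop (𝓝 L) :=
    fun k => hL'.comp (tendsto_add_atTop_nat k)
  -- first-order tail asymptotics
  have hu : Tendsto (fun n => S n / γ ^ n) atTop (𝓝 (w 0 * L / (1 - γ))) := by
    have hf : ∀ n, HasSum (fun k => γ ^ k * (w 0 * P (n + k))) (S n / γ ^ n) := by
      intro n
      have h := (hS_hasSum n).div_const (γ ^ n)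
      have hfun : (fun k => w (n + k) / γ ^ n) = fun k => γ ^ k * (w 0 * P (n + k)) := by
        funext k
        rw [key3 (n + k), pow_add]
        field_simp
      rwa [hfun] at h
    have hg : HasSum (fun k : ℕ => γ ^ k * (w 0 * L)) ((1 - γ)⁻¹ * (w 0 * L)) :=
      (hasSum_geometric_of_lt_one hγ0.le hγ1).mul_right _
    have hdc := tendsto_tsum_of_dominated_convergence
      (f := fun (n k : ℕ) => γ ^ k * (w 0 * P (n + k)))
      (g := fun k => γ ^ k * (w 0 * L))
      (bound := fun k => γ ^ k * (w 0 * M))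
      (((summable_geometric_of_lt_one hγ0.le hγ1).mul_right _))
      (fun k => ((hshiftP k).const_mul (w 0)).const_mul (γ ^ k))
      (Eventually.of_forall (fun n k => by
        rw [Real.norm_eq_abs,
          abs_of_pos (mul_pos (hγn k) (mul_pos (hw 0) (hPpos (n + k))))]
        exact mul_le_mul_of_nonneg_left
          (mul_le_mul_of_nonneg_left (hM (n + k)) (hw 0).le) (hγn k).le))
    have h1 : (∑' k, (fun (n k : ℕ) => γ ^ k * (w 0 * P (n + k))) · k)
        = fun n => S n / γ ^ n := funext fun n => (hf n).tsum_eq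
    rw [h1, hg.tsum_eq] at hdc
    have : (1 - γ)⁻¹ * (w 0 * L) = w 0 * L / (1 - γ) := by ring
    rwa [this] at hdc
  -- first-order asymptotics for r
  have hA : Tendsto (fun n => (r n - rs) / γ ^ n) atTop
      (𝓝 ((m - 1) * rs * rs * (w 0 * L / (1 - γ)))) := by
    have h : Tendsto (fun n => (m - 1) * rs * r n * (S n / γ ^ n)) atTop
        (𝓝 ((m - 1) * rs * rs * (w 0 * L / (1 - γ)))) :=
      (Tendsto.const_mul ((m - 1) * rs) hrlim).mul hu
    refine h.congr (fun n => ?_)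
    rw [hrid n]
    ring
  -- bound on first-order ratio
  obtain ⟨M2, hM2⟩ : ∃ M2, ∀ n, |(r n - rs) / γ ^ n| ≤ M2 := by
    obtain ⟨M2, hM2⟩ := (hA.abs).bddAbove_range
    exact ⟨M2, fun n => hM2 (Set.mem_range_self n)⟩
  have habs : ∀ n, |r n - rs| ≤ M2 * γ ^ n := by
    intro n
    have h := hM2 n
    rw [abs_div, abs_of_pos (hγn n), div_le_iff₀ (hγn n)] at h
    linarith
  -- differences of P
  have hPdiff : ∀ k, P k - P (k + 1) = P k * ((r (k + 1) - rs) / (1 - rs)) := by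
    intro k
    simp only [hP_def]
    rw [Finset.prod_range_succ]
    field_simp
    ring
  have hPd_sum : Summable (fun k => P k - P (k + 1)) := by
    apply aux_geom_summable hγ0.le hγ1 _ (M * (M2 * γ) / (1 - rs))
    intro k
    rw [hPdiff k, abs_mul, abs_div, abs_of_pos (hPpos k), abs_of_pos h1rs]
    have h3 : |r (k + 1) - rs| ≤ M2 * γ * γ ^ k := by
      have := habs (k + 1)
      calc |r (k + 1) - rs| ≤ M2 * γ ^ (k + 1) := this
        _ = M2 * γ * γ ^ k := by rw [pow_succ]; ring
    calc P k * (|r (k + 1) - rs| / (1 - rs))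
        ≤ M * ((M2 * γ * γ ^ k) / (1 - rs)) := by
          apply mul_le_mul (hM k) ((div_le_div_iff_of_pos_right h1rs).mpr h3) (by positivity) hMpos.le
      _ = M * (M2 * γ) / (1 - rs) * γ ^ k := by ring
  set Al := (m - 1) * rs * rs * (w 0 * L / (1 - γ)) with hAl_def
  -- second-order asymptotics of the product P
  have hεlim : Tendsto (fun n => (P n - L) / γ ^ n) atTop
      (𝓝 ((1 - γ)⁻¹ * (γ * (L * Al / (1 - rs))))) := by
    have hf : ∀ n, HasSum
        (fun k => γ ^ (k + 1) * (P (n + k) * ((r (n + k + 1) - rs) / γ ^ (n + k + 1)) / (1 - rs)))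
        ((P n - L) / γ ^ n) := by
      intro n
      have h := (aux_tail_hasSum P L hL' hPd_sum n).div_const (γ ^ n)
      have hfun : (fun k => (P (n + k) - P (n + k + 1)) / γ ^ n)
          = fun k => γ ^ (k + 1) * (P (n + k) * ((r (n + k + 1) - rs) / γ ^ (n + k + 1)) / (1 - rs)) := by
        funext k
        rw [hPdiff (n + k)]
        rw [show n + k + 1 = n + (k + 1) from rfl, pow_add]
        field_simp
        ring
      rwa [hfun] at h
    have hg : HasSum (fun k : ℕ => γ ^ (k + 1) * (L * Al / (1 - rs)))
        ((1 - γ)⁻¹ * (γ * (L * Al / (1 - rs)))) := by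
      have h := (hasSum_geometric_of_lt_one hγ0.le hγ1).mul_right (γ * (L * Al / (1 - rs)))
      have hfun : (fun k : ℕ => γ ^ k * (γ * (L * Al / (1 - rs))))
          = fun k : ℕ => γ ^ (k + 1) * (L * Al / (1 - rs)) := by
        funext k
        rw [pow_succ]
        ring
      rwa [hfun] at h
    have hsb : Summable (fun k : ℕ => γ ^ (k + 1) * (M * M2 / (1 - rs))) := by
      apply ((summable_geometric_of_lt_one hγ0.le hγ1).mul_right
        (γ * (M * M2 / (1 - rs)))).congr
      intro k
      rw [pow_succ]
      ring
    have hdc := tendsto_tsum_of_dominated_convergence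
      (f := fun (n k : ℕ) =>
        γ ^ (k + 1) * (P (n + k) * ((r (n + k + 1) - rs) / γ ^ (n + k + 1)) / (1 - rs)))
      (g := fun k => γ ^ (k + 1) * (L * Al / (1 - rs)))
      (bound := fun k => γ ^ (k + 1) * (M * M2 / (1 - rs)))
      hsb
      (fun k => by
        have h1 : Tendsto (fun n => P (n + k) * ((r (n + (k + 1)) - rs) / γ ^ (n + (k + 1))))
            atTop (𝓝 (L * Al)) := (hshiftP k).mul (hA.comp (tendsto_add_atTop_nat (k + 1)))
        exact (Tendsto.const_mul (γ ^ (k + 1)) (h1.div_const (1 - rs))))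
      (Eventually.of_forall (fun n k => by
        rw [Real.norm_eq_abs, abs_mul, abs_div, abs_mul, abs_of_pos (hγn (k + 1)),
          abs_of_pos (hPpos (n + k)), abs_of_pos h1rs]
        apply mul_le_mul_of_nonneg_left _ (hγn (k + 1)).le
        apply (div_le_div_iff_of_pos_right h1rs).mpr
        exact mul_le_mul (hM (n + k)) (hM2 (n + k + 1)) (abs_nonneg _) hMpos.le))
    have h1 : (∑' k, (fun (n k : ℕ) =>
        γ ^ (k + 1) * (P (n + k) * ((r (n + k + 1) - rs) / γ ^ (n + k + 1)) / (1 - rs))) · k)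
        = fun n => (P n - L) / γ ^ n := funext fun n => (hf n).tsum_eq
    rw [h1, hg.tsum_eq] at hdc
    exact hdc
  obtain ⟨M3, hM3⟩ : ∃ M3, ∀ n, |(P n - L) / γ ^ n| ≤ M3 := by
    obtain ⟨M3, hM3⟩ := (hεlim.abs).bddAbove_range
    exact ⟨M3, fun n => hM3 (Set.mem_range_self n)⟩
  -- second-order tail asymptotics
  have hγ2nn : (0:ℝ) ≤ γ ^ 2 := sq_nonneg γ
  have hS2 : Tendsto (fun n => (S n - w 0 * L * γ ^ n / (1 - γ)) / γ ^ (2 * n)) atTop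
      (𝓝 ((1 - γ ^ 2)⁻¹ * (w 0 * ((1 - γ)⁻¹ * (γ * (L * Al / (1 - rs))))))) := by
    have hf : ∀ n, HasSum (fun k => γ ^ (2 * k) * (w 0 * ((P (n + k) - L) / γ ^ (n + k))))
        ((S n - w 0 * L * γ ^ n / (1 - γ)) / γ ^ (2 * n)) := by
      intro n
      have h2 : HasSum (fun k : ℕ => γ ^ k * (w 0 * L * γ ^ n))
          ((1 - γ)⁻¹ * (w 0 * L * γ ^ n)) :=
        (hasSum_geometric_of_lt_one hγ0.le hγ1).mul_right _
      have h := ((hS_hasSum n).sub h2).div_const (γ ^ (2 * n))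
      have hval : (S n - (1 - γ)⁻¹ * (w 0 * L * γ ^ n)) = S n - w 0 * L * γ ^ n / (1 - γ) := by
        ring
      rw [hval] at h
      have hfun : (fun k => (w (n + k) - γ ^ k * (w 0 * L * γ ^ n)) / γ ^ (2 * n))
          = fun k => γ ^ (2 * k) * (w 0 * ((P (n + k) - L) / γ ^ (n + k))) := by
        funext k
        rw [key3 (n + k), show γ ^ (2 * n) = γ ^ n * γ ^ n from by rw [two_mul, pow_add],
          show γ ^ (2 * k) = γ ^ k * γ ^ k from by rw [two_mul, pow_add],
          pow_add γ n k]
        field_simp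
      rwa [hfun] at h
    have hg : HasSum (fun k : ℕ => γ ^ (2 * k) * (w 0 * ((1 - γ)⁻¹ * (γ * (L * Al / (1 - rs))))))
        ((1 - γ ^ 2)⁻¹ * (w 0 * ((1 - γ)⁻¹ * (γ * (L * Al / (1 - rs)))))) := by
      have h := (hasSum_geometric_of_lt_one hγ2nn hγ2).mul_right
        (w 0 * ((1 - γ)⁻¹ * (γ * (L * Al / (1 - rs)))))
      have hfun : (fun k : ℕ => (γ ^ 2) ^ k * (w 0 * ((1 - γ)⁻¹ * (γ * (L * Al / (1 - rs))))))
          = fun k : ℕ => γ ^ (2 * k) * (w 0 * ((1 - γ)⁻¹ * (γ * (L * Al / (1 - rs)))))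
          := funext fun k => by rw [← pow_mul]
      rwa [hfun] at h
    have hsb : Summable (fun k : ℕ => γ ^ (2 * k) * (w 0 * M3)) := by
      apply ((summable_geometric_of_lt_one hγ2nn hγ2).mul_right (w 0 * M3)).congr
      intro k
      rw [← pow_mul]
    have hdc := tendsto_tsum_of_dominated_convergence
      (f := fun (n k : ℕ) => γ ^ (2 * k) * (w 0 * ((P (n + k) - L) / γ ^ (n + k))))
      (g := fun k => γ ^ (2 * k) * (w 0 * ((1 - γ)⁻¹ * (γ * (L * Al / (1 - rs))))))
      (bound := fun k => γ ^ (2 * k) * (w 0 * M3))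
      hsb
      (fun k => by
        have h1 : Tendsto (fun n => (P (n + k) - L) / γ ^ (n + k)) atTop
            (𝓝 ((1 - γ)⁻¹ * (γ * (L * Al / (1 - rs))))) :=
          hεlim.comp (tendsto_add_atTop_nat k)
        exact Tendsto.const_mul _ (Tendsto.const_mul _ h1))
      (Eventually.of_forall (fun n k => by
        rw [Real.norm_eq_abs, abs_mul, abs_mul, abs_of_pos (hγn (2 * k)),
          abs_of_pos (hw 0)]
        exact mul_le_mul_of_nonneg_left
          (mul_le_mul_of_nonneg_left (hM3 (n + k)) (hw 0).le) (hγn (2 * k)).le))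
    have h1 : (∑' k, (fun (n k : ℕ) =>
        γ ^ (2 * k) * (w 0 * ((P (n + k) - L) / γ ^ (n + k)))) · k)
        = fun n => (S n - w 0 * L * γ ^ n / (1 - γ)) / γ ^ (2 * n) :=
      funext fun n => (hf n).tsum_eq
    rw [h1, hg.tsum_eq] at hdc
    exact hdc
  -- final assembly
  have hγnne : ∀ n : ℕ, γ ^ n ≠ 0 := fun n => (hγn n).ne'
  have hptwise : ∀ n : ℕ,
      (r n - rs - K * rs ^ 2 * γ ^ n / (1 - γ) -
          (1 + m * rs / (1 - γ ^ 2)) * K ^ 2 * rs ^ 3 * γ ^ (2 * n) / (1 - γ) ^ 2) / γ ^ (2 * n)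
        = (m - 1) * rs ^ 2 * ((S n - w 0 * L * γ ^ n / (1 - γ)) / γ ^ (2 * n))
          + (m - 1) * rs * (((r n - rs) / γ ^ n) * (S n / γ ^ n))
          - (1 + m * rs / (1 - γ ^ 2)) * K ^ 2 * rs ^ 3 / (1 - γ) ^ 2 := by
    intro n
    have h2n : γ ^ (2 * n) = γ ^ n * γ ^ n := by rw [two_mul, pow_add]
    have e : r n - rs = (m - 1) * rs ^ 2 * S n + (m - 1) * rs * ((r n - rs) * S n) := by
      linear_combination (hrid n)
    rw [hw0K, h2n]
    have hXX : γ ^ n * γ ^ n * (γ ^ n * γ ^ n)⁻¹ = 1 := mul_inv_cancel₀ (mul_ne_zero (hγnne n) (hγnne n))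
    linear_combination (1 / (γ ^ n * γ ^ n)) * e - ((1 + m * rs / (1 - γ ^ 2)) * ((m - 1) * w 0 * L) ^ 2 * rs ^ 3 / (1 - γ) ^ 2) * hXX
  have hlim : Tendsto
      (fun n => (m - 1) * rs ^ 2 * ((S n - w 0 * L * γ ^ n / (1 - γ)) / γ ^ (2 * n))
        + (m - 1) * rs * (((r n - rs) / γ ^ n) * (S n / γ ^ n))
        - (1 + m * rs / (1 - γ ^ 2)) * K ^ 2 * rs ^ 3 / (1 - γ) ^ 2) atTop
      (𝓝 ((m - 1) * rs ^ 2 * ((1 - γ ^ 2)⁻¹ * (w 0 * ((1 - γ)⁻¹ * (γ * (L * Al / (1 - rs))))))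
        + (m - 1) * rs * (Al * (w 0 * L / (1 - γ)))
        - (1 + m * rs / (1 - γ ^ 2)) * K ^ 2 * rs ^ 3 / (1 - γ) ^ 2)) := by
    exact ((Tendsto.const_mul _ hS2).add
      (Tendsto.const_mul _ (hA.mul hu))).sub tendsto_const_nhds
  have hzero : (m - 1) * rs ^ 2 * ((1 - γ ^ 2)⁻¹ * (w 0 * ((1 - γ)⁻¹ * (γ * (L * Al / (1 - rs))))))
        + (m - 1) * rs * (Al * (w 0 * L / (1 - γ)))
        - (1 + m * rs / (1 - γ ^ 2)) * K ^ 2 * rs ^ 3 / (1 - γ) ^ 2 = 0 := by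
    have h1γne : (1 - γ) ≠ 0 := h1γ.ne'
    have h1γ2ne : (1 - γ ^ 2) ≠ 0 := h1γ2.ne'
    have h1rsne : (1 - rs) ≠ 0 := h1rs.ne'
    rw [hAl_def, hw0K]
    subst hγ
    field_simp
    ring
  rw [hzero] at hlim
  exact hlim.congr (fun n => (hptwise n).symm)
end

section
/- In the subcritical case (r_n → r_* with 1 - 1/m < r_* < 1), as n → ∞: p_n = 1 - K r_* γ_*^n/(m - 1) - (1 + m r_*/(1 - γ_*)) · K^2 r_*^2 γ_*^{2n}/((m - 1)(1 - γ_*)) + o(γ_*^{2n}); that is, (p_n - 1 + K r_* γ_*^n/(m - 1) + (1 + m r_*/(1 - γ_*)) K^2 r_*^2 γ_*^{2n}/((m - 1)(1 - γ_*))) / γ_*^{2n} → 0. -/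
open Filter Finset Topology

private lemma tail_lemma {γ c : ℝ} (h0 : 0 < γ) (h1 : γ < 1) {g : ℕ → ℝ}
    (hg : Tendsto g atTop (𝓝 c)) :
    Tendsto (fun n => ∑' j : ℕ, g (n + j) * γ ^ j) atTop (𝓝 (c / (1 - γ))) := by
  have hγle : (0:ℝ) ≤ γ := h0.le
  have h1γ : (0:ℝ) < 1 - γ := by linarith
  have hgeom : Summable (fun j : ℕ => γ ^ j) := summable_geometric_of_lt_one hγle h1
  obtain ⟨B, hB⟩ : ∃ B, ∀ k, |g k| ≤ B := by
    obtain ⟨B, hB⟩ := hg.abs.bddAbove_range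
    exact ⟨B, fun k => hB ⟨k, rfl⟩⟩
  have hsummand : ∀ n, Summable (fun j : ℕ => g (n + j) * γ ^ j) := by
    intro n
    apply Summable.of_abs
    refine Summable.of_nonneg_of_le (fun j => abs_nonneg _) (fun j => ?_) (hgeom.mul_left B)
    rw [abs_mul, abs_pow, abs_of_nonneg hγle]
    exact mul_le_mul_of_nonneg_right (hB _) (pow_nonneg hγle j)
  rw [Metric.tendsto_atTop]
  intro ε hε
  have hε' : 0 < ε * (1 - γ) / 2 := by positivity
  obtain ⟨N, hN⟩ := (Metric.tendsto_atTop.mp hg) (ε * (1 - γ) / 2) hε'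
  refine ⟨N, fun n hn => ?_⟩
  have hsc : Summable (fun j : ℕ => c * γ ^ j) := hgeom.mul_left c
  have key : (∑' j : ℕ, g (n + j) * γ ^ j) - c / (1 - γ) = ∑' j : ℕ, (g (n + j) - c) * γ ^ j := by
    have h2 : ∑' j : ℕ, c * γ ^ j = c / (1 - γ) := by
      rw [tsum_mul_left, tsum_geometric_of_lt_one hγle h1, div_eq_mul_inv]
    rw [← h2, ← Summable.tsum_sub (hsummand n) hsc]
    exact tsum_congr fun j => by ring
  have habs : Summable (fun j : ℕ => ‖(g (n + j) - c) * γ ^ j‖) := by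
    refine Summable.of_nonneg_of_le (fun j => norm_nonneg _) (fun j => ?_)
      (hgeom.mul_left (B + |c|))
    rw [Real.norm_eq_abs, abs_mul, abs_pow, abs_of_nonneg hγle]
    refine mul_le_mul_of_nonneg_right ?_ (pow_nonneg hγle j)
    calc |g (n + j) - c| ≤ |g (n + j)| + |c| := abs_sub _ _
      _ ≤ B + |c| := by linarith [hB (n + j)]
  rw [Real.dist_eq, key]
  calc |∑' j : ℕ, (g (n + j) - c) * γ ^ j|
      ≤ ∑' j : ℕ, ‖(g (n + j) - c) * γ ^ j‖ := by
        simpa [Real.norm_eq_abs] using norm_tsum_le_tsum_norm habs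
    _ ≤ ∑' j : ℕ, (ε * (1 - γ) / 2) * γ ^ j := by
        refine Summable.tsum_le_tsum (fun j => ?_) habs (hgeom.mul_left _)
        rw [Real.norm_eq_abs, abs_mul, abs_pow, abs_of_nonneg hγle]
        refine mul_le_mul_of_nonneg_right ?_ (pow_nonneg hγle j)
        have := hN (n + j) (le_trans hn (Nat.le_add_right n j))
        rw [Real.dist_eq] at this
        exact this.le
    _ = (ε * (1 - γ) / 2) * (1 - γ)⁻¹ := by
        rw [tsum_mul_left, tsum_geometric_of_lt_one hγle h1]
    _ = ε / 2 := by
        field_simp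
    _ < ε := by linarith

private lemma tail_div {γ a : ℝ} (h0 : 0 < γ) (h1 : γ < 1) {h : ℕ → ℝ}
    (hconv : Tendsto (fun k => h k / γ ^ k) atTop (𝓝 a)) :
    Tendsto (fun n => (∑' j : ℕ, h (n + j)) / γ ^ n) atTop (𝓝 (a / (1 - γ))) := by
  have := tail_lemma h0 h1 hconv
  refine this.congr fun n => ?_
  have hγn : (γ:ℝ) ^ n ≠ 0 := (pow_pos h0 n).ne'
  have heq : ∀ j : ℕ, h (n + j) / γ ^ (n + j) * γ ^ j = (h (n + j)) * (γ ^ n)⁻¹ := by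
    intro j
    have hj : (γ:ℝ) ^ j ≠ 0 := (pow_pos h0 j).ne'
    field_simp [pow_add]
    ring
  rw [tsum_congr heq, tsum_mul_right, div_eq_mul_inv]

private lemma prod_one_sub_ge {s : ℕ → ℝ} (h0 : ∀ j, 0 ≤ s j) (h1 : ∀ j, s j ≤ 1) :
    ∀ J : ℕ, 1 - ∑ j ∈ range J, s j ≤ ∏ j ∈ range J, (1 - s j) := by
  intro J
  induction J with
  | zero => simp
  | succ J ih =>
    rw [Finset.sum_range_succ, Finset.prod_range_succ]
    have hs := h0 J
    have hs1 := h1 J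
    have hprod0 : (0:ℝ) ≤ ∏ j ∈ range J, (1 - s j) :=
      Finset.prod_nonneg fun j _ => by linarith [h1 j]
    have hsum0 : (0:ℝ) ≤ ∑ j ∈ range J, s j := Finset.sum_nonneg fun j _ => h0 j
    nlinarith [ih]

private lemma prod_one_sub_le {s : ℕ → ℝ} (h0 : ∀ j, 0 ≤ s j) (h1 : ∀ j, s j ≤ 1) :
    ∀ J : ℕ, (1 + ∑ j ∈ range J, s j) * ∏ j ∈ range J, (1 - s j) ≤ 1 := by
  intro J
  induction J with
  | zero => simp
  | succ J ih =>
    rw [Finset.sum_range_succ, Finset.prod_range_succ]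
    have hs := h0 J
    have hs1 := h1 J
    have hprod0 : (0:ℝ) ≤ ∏ j ∈ range J, (1 - s j) :=
      Finset.prod_nonneg fun j _ => by linarith [h1 j]
    have hsum0 : (0:ℝ) ≤ ∑ j ∈ range J, s j := Finset.sum_nonneg fun j _ => h0 j
    nlinarith [ih, mul_nonneg (mul_nonneg hs hsum0) hprod0, mul_nonneg (mul_nonneg hs hs) hprod0]


set_option maxHeartbeats 2000000 in
/-- In the subcritical case (`r_n → r_*` with
`1 - 1/m < r_* < 1`), with `γ_* = m(1 - r_*)` and
`K = (r_0 - r_1)/(r_0 r_1) · ∏_{i=1}^∞ (1 - r_i)/(1 - r_*)`, as `n → ∞`: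
`p_n = 1 - K r_* γ_*ⁿ/(m-1) - (1 + m r_*/(1-γ_*)) K² r_*² γ_*^{2n}/((m-1)(1-γ_*)) + o(γ_*^{2n})`. -/
theorem stmt14 (m : ℝ) (hm : 1 < m) (r p : ℕ → ℝ)
    (hmem : ∀ n, r n ∈ Set.Ioo (0 : ℝ) 1 ∧ p n ∈ Set.Ioo (0 : ℝ) 1)
    (hrec_r : ∀ n, r (n + 1) = r n / (m - (m - 1) * p n))
    (hrec_p : ∀ n, p (n + 1) = 1 - (1 - r (n + 1)) * (1 - r (n + 1) * p n / r n))
    (rs : ℝ) (hrlim : Tendsto r atTop (𝓝 rs))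
    (hrs1 : 1 - 1 / m < rs) (hrs2 : rs < 1)
    (γ : ℝ) (hγ : γ = m * (1 - rs))
    (L K : ℝ)
    (hL : Tendsto (fun n => ∏ i ∈ Finset.range n, ((1 - r (i + 1)) / (1 - rs)))
      atTop (𝓝 L))
    (hK : K = (r 0 - r 1) / (r 0 * r 1) * L) (hKpos : 0 < K) :
    Tendsto
      (fun n : ℕ =>
        (p n - 1 + K * rs * γ ^ n / (m - 1) +
            (1 + m * rs / (1 - γ)) * K ^ 2 * rs ^ 2 * γ ^ (2 * n) /
              ((m - 1) * (1 - γ))) /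
          γ ^ (2 * n))
      atTop (𝓝 0) := by
  have hm1 : (0:ℝ) < m - 1 := by linarith
  have hm0 : (0:ℝ) < m := by linarith
  have hr0 : ∀ n, 0 < r n := fun n => (hmem n).1.1
  have hr1 : ∀ n, r n < 1 := fun n => (hmem n).1.2
  have hp1 : ∀ n, p n < 1 := fun n => (hmem n).2.2
  have hD : ∀ n, 1 < m - (m - 1) * p n := by intro n; nlinarith [hp1 n]
  have hD0 : ∀ n, (0:ℝ) < m - (m - 1) * p n := fun n => lt_trans one_pos (hD n)
  have hdec : ∀ n, r (n + 1) < r n := by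
    intro n
    rw [hrec_r n, div_lt_iff₀ (hD0 n)]
    nlinarith [hD n, hr0 n]
  have hanti : Antitone r := antitone_nat_of_succ_le fun n => (hdec n).le
  have hrsle : ∀ n, rs ≤ r n := by
    intro n
    refine le_of_tendsto hrlim ?_
    filter_upwards [eventually_ge_atTop n] with k hk
    exact hanti hk
  have hrs0 : 0 < rs := by
    have h1m : 1 / m < 1 := by rw [div_lt_one hm0]; linarith
    linarith
  have hrs1' : (0:ℝ) < 1 - rs := by linarith
  have hγ0 : 0 < γ := by rw [hγ]; positivity
  have hγ1 : γ < 1 := by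
    have h1 : 1 - rs < 1 / m := by linarith
    rw [hγ]
    calc m * (1 - rs) < m * (1 / m) := mul_lt_mul_of_pos_left h1 hm0
      _ = 1 := by field_simp
  have h1γ : (0:ℝ) < 1 - γ := by linarith
  set A : ℝ := (r 0 - r 1) / ((m - 1) * (r 0 * r 1)) with hA
  set P : ℕ → ℝ := fun n => ∏ i ∈ range n, ((1 - r (i + 1)) / (1 - rs)) with hP
  have hLP : Tendsto P atTop (𝓝 L) := hL
  have hPpos : ∀ n, 0 < P n := by
    intro n
    simp only [hP]
    exact Finset.prod_pos fun i _ => div_pos (by linarith [hr1 (i + 1)]) hrs1'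
  have hrr : ∀ n, r (n + 1) * (m - (m - 1) * p n) = r n := by
    intro n
    rw [hrec_r n, div_mul_cancel₀ _ (hD0 n).ne']
  have hKA : K = (m - 1) * A * L := by
    rw [hK, hA]
    have h0 : r 0 ≠ 0 := (hr0 0).ne'
    have h1 : r 1 ≠ 0 := (hr0 1).ne'
    field_simp
  -- the fundamental identity
  have hq : ∀ n, 1 - p n = A * r n * γ ^ n * P n := by
    intro n
    induction n with
    | zero =>
      have hP0 : P 0 = 1 := by simp [hP]
      rw [hP0, hA, pow_zero]
      have h := hrr 0
      have h0 : r 0 ≠ 0 := (hr0 0).ne'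
      have h1 : r 1 ≠ 0 := (hr0 1).ne'
      have hD0' : (m - (m-1) * p 0) ≠ 0 := (hD0 0).ne'
      field_simp
      linear_combination h
    | succ n ih =>
      have h := hrr n
      have hrn : r n ≠ 0 := (hr0 n).ne'
      have hkey : 1 - p (n + 1) = m * (1 - p n) * (1 - r (n + 1)) * (r (n + 1) / r n) := by
        rw [hrec_p n]
        have h2 : 1 - r (n + 1) * p n / r n = m * (1 - p n) * (r (n + 1) / r n) := by
          field_simp
          linear_combination -h
        rw [h2]
        ring
      have hPs : P (n + 1) = P n * ((1 - r (n + 1)) / (1 - rs)) := by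
        simp only [hP]
        exact Finset.prod_range_succ _ n
      rw [hkey, ih, hPs, hγ, pow_succ]
      field_simp
  -- telescoping sum for r n - rs
  have htel : ∀ n, HasSum (fun j => r (n + j) - r (n + j + 1)) (r n - rs) := by
    intro n
    rw [hasSum_iff_tendsto_nat_of_nonneg (fun j => by linarith [hdec (n + j)])]
    have hps : ∀ J, ∑ j ∈ range J, (r (n + j) - r (n + j + 1)) = r n - r (n + J) := by
      intro J
      have h := Finset.sum_range_sub' (fun j => r (n + j)) J
      simp only [Nat.add_zero] at h
      rw [← h]
      exact Finset.sum_congr rfl fun j _ => by rw [Nat.add_assoc]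
    refine Tendsto.congr (fun J => (hps J).symm) ?_
    have h2 : Tendsto (fun J => r (n + J)) atTop (𝓝 rs) :=
      (hrlim.comp (tendsto_add_atTop_nat n)).congr fun J => by
        show r (J + n) = r (n + J); rw [Nat.add_comm]
    exact tendsto_const_nhds.sub h2
  -- d k / γ^k limit
  have hdk : ∀ k, r k - r (k + 1) = ((m - 1) * A * (r (k + 1) * r k * P k)) * γ ^ k := by
    intro k
    have h := hrr k
    have h2 := hq k
    linear_combination ((m - 1) * r (k + 1)) * h2 - h
  have hrsft : Tendsto (fun k => r (k + 1)) atTop (𝓝 rs) :=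
    hrlim.comp (tendsto_add_atTop_nat 1)
  have hglim : Tendsto (fun k => (m - 1) * A * (r (k + 1) * r k * P k)) atTop
      (𝓝 ((m - 1) * A * (rs * rs * L))) :=
    Tendsto.const_mul _ ((hrsft.mul hrlim).mul hLP)
  have hdiv : Tendsto (fun k => (r k - r (k + 1)) / γ ^ k) atTop
      (𝓝 ((m - 1) * A * (rs * rs * L))) := by
    refine hglim.congr fun k => ?_
    rw [hdk k, mul_div_cancel_right₀ _ (pow_pos hγ0 k).ne']
  set c2 : ℝ := ((m - 1) * A * (rs * rs * L)) / (1 - γ) with hc2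
  have hF1 : Tendsto (fun n => (r n - rs) / γ ^ n) atTop (𝓝 c2) := by
    have h := tail_div (h := fun k => r k - r (k + 1)) hγ0 hγ1 hdiv
    refine h.congr fun n => ?_
    congr 1
    exact (htel n).tsum_eq
  -- summability of r k - rs
  have hsum2 : Summable (fun k => r k - rs) := by
    obtain ⟨B, hB⟩ := hF1.abs.bddAbove_range
    refine Summable.of_nonneg_of_le (fun k => by linarith [hrsle k]) (fun k => ?_)
      ((summable_geometric_of_lt_one hγ0.le hγ1).mul_left B)
    have hγk : (0:ℝ) < γ ^ k := pow_pos hγ0 k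
    have hb : (r k - rs) / γ ^ k ≤ B := le_trans (le_abs_self _) (hB ⟨k, rfl⟩)
    calc r k - rs = ((r k - rs) / γ ^ k) * γ ^ k := (div_mul_cancel₀ _ hγk.ne').symm
      _ ≤ B * γ ^ k := mul_le_mul_of_nonneg_right hb hγk.le
  have hT : Tendsto (fun n => (∑' j : ℕ, (r (n + j) - rs)) / γ ^ n) atTop
      (𝓝 (c2 / (1 - γ))) := tail_div (h := fun k => r k - rs) hγ0 hγ1 hF1
  -- tail sums S n
  set S : ℕ → ℝ := fun n => (∑' j : ℕ, (r (n + 1 + j) - rs)) / (1 - rs) with hS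
  set b2 : ℝ := (c2 / (1 - γ)) * (γ / (1 - rs)) with hb2
  have hSsum : ∀ n, Summable (fun j : ℕ => r (n + 1 + j) - rs) := by
    intro n
    exact ((summable_nat_add_iff (n + 1)).2 hsum2).congr fun j => by
      rw [Nat.add_comm j (n + 1)]
  have hSdiv : Tendsto (fun n => S n / γ ^ n) atTop (𝓝 b2) := by
    have h := (hT.comp (tendsto_add_atTop_nat 1)).mul_const (γ / (1 - rs))
    refine h.congr fun n => ?_
    show (∑' j : ℕ, (r (n + 1 + j) - rs)) / γ ^ (n + 1) * (γ / (1 - rs)) = S n / γ ^ n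
    simp only [hS]
    have hγn : (γ:ℝ) ^ n ≠ 0 := (pow_pos hγ0 n).ne'
    field_simp [pow_succ]
    ring
  have hS0 : Tendsto S atTop (𝓝 0) := by
    have h := hSdiv.mul (tendsto_pow_atTop_nhds_zero_of_lt_one hγ0.le hγ1)
    rw [mul_zero] at h
    refine h.congr fun n => ?_
    exact div_mul_cancel₀ _ (pow_pos hγ0 n).ne'
  have hSnonneg : ∀ n, 0 ≤ S n := by
    intro n
    apply div_nonneg _ hrs1'.le
    exact tsum_nonneg fun j => by linarith [hrsle (n + 1 + j)]
  -- product tail bounds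
  have hWbounds : ∀ n, (S n - S n ^ 2 ≤ 1 - L / P n) ∧ (1 - L / P n ≤ S n) := by
    intro n
    set sf : ℕ → ℝ := fun j => (r (n + 1 + j) - rs) / (1 - rs) with hsf
    have hs0 : ∀ j, 0 ≤ sf j := fun j => div_nonneg (by linarith [hrsle (n + 1 + j)]) hrs1'.le
    have hs1 : ∀ j, sf j ≤ 1 := fun j => by
      simp only [hsf]
      rw [div_le_one hrs1']
      linarith [hr1 (n + 1 + j)]
    have hone : ∀ j, 1 - sf j = (1 - r (n + 1 + j)) / (1 - rs) := by
      intro j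
      simp only [hsf]
      field_simp
      ring
    have hprodlim : Tendsto (fun J => ∏ j ∈ range J, (1 - sf j)) atTop (𝓝 (L / P n)) := by
      have h1 : ∀ J, ∏ j ∈ range J, (1 - sf j) = P (n + J) / P n := by
        intro J
        have hPadd : P (n + J) = P n * ∏ j ∈ range J, ((1 - r (n + j + 1)) / (1 - rs)) := by
          simp only [hP]
          exact Finset.prod_range_add (fun i => (1 - r (i + 1)) / (1 - rs)) n J
        rw [hPadd, mul_div_cancel_left₀ _ (hPpos n).ne']
        exact Finset.prod_congr rfl fun j _ => by
          rw [hone j, show n + 1 + j = n + j + 1 from by omega]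
      have h2 : Tendsto (fun J => P (n + J)) atTop (𝓝 L) :=
        (hLP.comp (tendsto_add_atTop_nat n)).congr fun J => by
          show P (J + n) = P (n + J); rw [Nat.add_comm]
      exact Tendsto.congr (fun J => (h1 J).symm) (h2.div_const (P n))
    have hsumlim : Tendsto (fun J => ∑ j ∈ range J, sf j) atTop (𝓝 (S n)) := by
      have h2 := (hSsum n).hasSum.tendsto_sum_nat
      have h3 := h2.div_const (1 - rs)
      refine h3.congr fun J => ?_
      simp only [hsf]
      rw [Finset.sum_div]
    have ineq1 : 1 - S n ≤ L / P n :=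
      le_of_tendsto_of_tendsto' (tendsto_const_nhds.sub hsumlim) hprodlim
        (prod_one_sub_ge hs0 hs1)
    have ineq2 : (1 + S n) * (L / P n) ≤ 1 :=
      le_of_tendsto_of_tendsto' ((tendsto_const_nhds.add hsumlim).mul hprodlim)
        tendsto_const_nhds (prod_one_sub_le hs0 hs1)
    refine ⟨?_, by linarith⟩
    nlinarith [hSnonneg n, mul_nonneg (mul_nonneg (hSnonneg n) (hSnonneg n)) (hSnonneg n)]
  -- second order limit for P
  have hF2 : Tendsto (fun n => (P n - L) / γ ^ n) atTop (𝓝 (L * b2)) := by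
    have hWlim : Tendsto (fun n => (1 - L / P n) / γ ^ n) atTop (𝓝 b2) := by
      have hlow : Tendsto (fun n => (S n - S n ^ 2) / γ ^ n) atTop (𝓝 b2) := by
        have h := hSdiv.sub (hSdiv.mul hS0)
        rw [mul_zero, sub_zero] at h
        refine h.congr fun n => ?_
        have hγn : (γ:ℝ) ^ n ≠ 0 := (pow_pos hγ0 n).ne'
        field_simp
      refine tendsto_of_tendsto_of_tendsto_of_le_of_le hlow hSdiv ?_ ?_
      · exact fun n => (div_le_div_iff_of_pos_right (pow_pos hγ0 n)).2 (hWbounds n).1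
      · exact fun n => (div_le_div_iff_of_pos_right (pow_pos hγ0 n)).2 (hWbounds n).2
    have h := hLP.mul hWlim
    refine h.congr fun n => ?_
    have hγn : (γ:ℝ) ^ n ≠ 0 := (pow_pos hγ0 n).ne'
    have hPn : P n ≠ 0 := (hPpos n).ne'
    field_simp
  -- final combination
  set C2 : ℝ := (1 + m * rs / (1 - γ)) * K ^ 2 * rs ^ 2 / ((m - 1) * (1 - γ)) with hC2
  have hgoal : Tendsto
      (fun n => -A * (((r n - rs) / γ ^ n) * P n + rs * ((P n - L) / γ ^ n)) + C2)
      atTop (𝓝 (-A * (c2 * L + rs * (L * b2)) + C2)) :=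
    (((hF1.mul hLP).add ((hF2.const_mul rs))).const_mul (-A)).add_const C2
  have hzero : -A * (c2 * L + rs * (L * b2)) + C2 = 0 := by
    rw [hC2, hb2, hc2, hKA, hγ]
    have h1γ' : 1 - m * (1 - rs) ≠ 0 := by rw [← hγ]; exact h1γ.ne'
    field_simp
    ring
  rw [hzero] at hgoal
  refine hgoal.congr fun n => ?_
  have hqn := hq n
  have hγn : (γ:ℝ) ^ n ≠ 0 := (pow_pos hγ0 n).ne'
  have hpw : γ ^ (2 * n) = γ ^ n * γ ^ n := by rw [two_mul, pow_add]
  have hp1n : p n - 1 = -(A * r n * γ ^ n * P n) := by linarith [hqn]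
  rw [hC2, hpw, hp1n, hKA]
  field_simp
  ring
end
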